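/- arXiv:2110.06488 — 12 statements merged into one kernel-verified Lean document; each statement's English description precedes it below -/
import Mathlib

section
/- Let P = {D_1,…,D_p} be the set of hyperplane-arrangement matrices of X. If the number m of hidden neurons satisfies m ≥ 2p, then the optimal value of the non-convex max-margin problem, namely the infimum over W_1 ∈ ℝ^{d×m} (with columns w_{1,i}) and w_2 ∈ ℝ^m of (1/2)(‖W_1‖_F² + ‖w_2‖₂²) subject to y_n · Σ_{i=1}^m (x_nᵀw_{1,i})_+ w_{2,i} ≥ 1 for all n ∈ {1,…,N}, equals the optimal value of the convex program: the infimum over u_1,…,u_p, u_1′,…,u_p′ ∈ ℝ^d of Σ_{j=1}^p (‖u_j‖₂ + ‖u_j′‖₂) subject to y_n Σ_{j=1}^p (D_j)_{nn} x_nᵀ(u_j′ − u_j) ≥ 1 for all n ∈ {1,…,N}, and (2D_j − I)Xu_j ≥ 0 and (2D_j − I)Xu_j′ ≥ 0 entrywise for all j ∈ {1,…,p}. -/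
/-!
A ReLU neuron `z ↦ max ⟪z, W⟫ 0 * w` is unchanged by the rescaling `(W, w) ↦ (t W, w / t)`, so
by AM-GM its weight decay is at least `|w| ‖W‖`, with equality for balanced neurons. On the cone
of weights with activation pattern `D_j` the neuron is linear, `max ⟪x_n, v⟫ 0 = (D_j)ₙₙ ⟪x_n, v⟫`.
Hence the neurons of a network that share a pattern and the sign of their output weight merge
into a single vector `u_j` or `u_j'` of the convex program, at no greater cost. Conversely each
`u_j` and `u_j'` is realized by one balanced neuron at exactly its cost, which takes `2p ≤ m`
neurons.
-/

noncomputable section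

open scoped RealInnerProductSpace

namespace ReLUNetwork

open Finset Function

variable {E : Type*} [NormedAddCommGroup E] {α β ι κ : Type*}

def weightDecay [Fintype ι] (W : ι → E) (w : ι → ℝ) : ℝ :=
  (1 / 2) * ((∑ i, ‖W i‖ ^ 2) + ∑ i, w i ^ 2)

lemma sum_abs_mul_norm_le_weightDecay [Fintype ι] (W : ι → E) (w : ι → ℝ) :
    ∑ i, |w i| * ‖W i‖ ≤ weightDecay W w := by
  rw [weightDecay, ← sum_add_distrib, mul_sum]
  refine sum_le_sum fun i _ => ?_
  nlinarith [two_mul_le_add_sq |w i| ‖W i‖, sq_abs (w i)]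

variable [InnerProductSpace ℝ E]

def output [Fintype ι] (W : ι → E) (w : ι → ℝ) (z : E) : ℝ :=
  ∑ i, max ⟪z, W i⟫ 0 * w i

/-- The paper's `(2 D_j - I) X v ≥ 0`: for a 0/1 pattern `Dj`, the ReLU acts on `⟪x n, v⟫` as
multiplication by `Dj n`. -/
def IsConsistent (x : α → E) (Dj : α → ℝ) (v : E) : Prop :=
  ∀ n, 0 ≤ (2 * Dj n - 1) * ⟪x n, v⟫

lemma ite_nonneg_mul_self (t : ℝ) : (if 0 ≤ t then (1 : ℝ) else 0) * t = max t 0 := by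
  split_ifs with h
  · simp [h]
  · simp [(not_le.1 h).le]

lemma isConsistent_of_pattern {x : α → E} {Dj : α → ℝ} {v : E}
    (hv : ∀ n, Dj n = if 0 ≤ ⟪x n, v⟫ then 1 else 0) : IsConsistent x Dj v := by
  intro n
  rw [hv n]
  split_ifs with h <;> linarith

lemma IsConsistent.sum_smul {x : α → E} {Dj : α → ℝ} {s : Finset ι} {c : ι → ℝ} {v : ι → E}
    (hc : ∀ i ∈ s, 0 ≤ c i) (hv : ∀ i ∈ s, IsConsistent x Dj (v i)) :
    IsConsistent x Dj (∑ i ∈ s, c i • v i) := by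
  intro n
  rw [inner_sum, mul_sum]
  refine sum_nonneg fun i hi => ?_
  rw [real_inner_smul_right, mul_left_comm]
  exact mul_nonneg (hc i hi) (hv i hi n)

lemma IsConsistent.max_inner_eq {x : α → E} {Dj : α → ℝ} {v : E}
    (hD : ∀ n, Dj n = 0 ∨ Dj n = 1) (hv : IsConsistent x Dj v) (n : α) :
    max ⟪x n, v⟫ 0 = Dj n * ⟪x n, v⟫ := by
  have h := hv n
  rcases hD n with hn | hn <;> rw [hn] at h ⊢
  · rw [zero_mul]
    exact max_eq_right (by linarith)
  · rw [one_mul]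
    exact max_eq_left (by linarith)

def balancedWeight (v : E) : E := (√‖v‖)⁻¹ • v

lemma norm_balancedWeight_sq (v : E) : ‖balancedWeight v‖ ^ 2 = ‖v‖ := by
  rcases eq_or_ne v 0 with rfl | hv
  · simp [balancedWeight]
  have hs : √‖v‖ ^ 2 = ‖v‖ := Real.sq_sqrt (norm_nonneg v)
  have hpos : 0 < √‖v‖ := Real.sqrt_pos.2 (norm_pos_iff.2 hv)
  rw [balancedWeight, norm_smul, norm_inv, Real.norm_of_nonneg hpos.le, mul_pow, inv_pow, hs]
  field_simp

lemma max_inner_balancedWeight_mul_sqrt (z v : E) :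
    max ⟪z, balancedWeight v⟫ 0 * √‖v‖ = max ⟪z, v⟫ 0 := by
  rcases eq_or_ne v 0 with rfl | hv
  · simp [balancedWeight]
  have hpos : 0 < √‖v‖ := Real.sqrt_pos.2 (norm_pos_iff.2 hv)
  rw [balancedWeight, real_inner_smul_right, ← mul_zero (√‖v‖)⁻¹,
    ← mul_max_of_nonneg _ _ (inv_nonneg.2 hpos.le), mul_zero]
  field_simp

lemma exists_network_of_injective [Fintype ι] [Fintype κ] {e : ι → κ} (he : Injective e)
    (W : ι → E) (w : ι → ℝ) :
    ∃ (W' : κ → E) (w' : κ → ℝ), output W' w' = output W w ∧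
      weightDecay W' w' = weightDecay W w := by
  have sum_extend : ∀ f : E → ℝ → ℝ, f 0 0 = 0 →
      ∑ k, f (extend e W 0 k) (extend e w 0 k) = ∑ i, f (W i) (w i) := by
    intro f hf
    refine (Fintype.sum_of_injective e he _ _ (fun k hk => ?_) fun i => ?_).symm
    · rw [extend_apply' _ _ _ (by simpa using hk), extend_apply' _ _ _ (by simpa using hk)]
      exact hf
    · rw [he.extend_apply, he.extend_apply]
  refine ⟨extend e W 0, extend e w 0, funext fun z => ?_, ?_⟩
  · exact sum_extend (fun a b => max ⟪z, a⟫ 0 * b) (by simp)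
  · rw [weightDecay, weightDecay, sum_extend (fun a _ => ‖a‖ ^ 2) (by simp),
      sum_extend (fun _ b => b ^ 2) (by simp)]

lemma exists_network_of_convex [Fintype β] {x : α → E} {D : β → α → ℝ}
    (hD : ∀ j n, D j n = 0 ∨ D j n = 1) {u u' : β → E}
    (hu : ∀ j, IsConsistent x (D j) (u j)) (hu' : ∀ j, IsConsistent x (D j) (u' j)) :
    ∃ (W : β ⊕ β → E) (w : β ⊕ β → ℝ),
      (∀ n, output W w (x n) = ∑ j, D j n * ⟪x n, u' j - u j⟫) ∧
      weightDecay W w = ∑ j, (‖u j‖ + ‖u' j‖) := by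
  refine ⟨Sum.elim (balancedWeight ∘ u') (balancedWeight ∘ u),
    Sum.elim (fun j => √‖u' j‖) (fun j => -√‖u j‖), fun n => ?_, ?_⟩
  · simp only [output, Fintype.sum_sum_type, Sum.elim_inl, Sum.elim_inr, comp_apply, mul_neg,
      max_inner_balancedWeight_mul_sqrt, (hu' _).max_inner_eq (hD _), (hu _).max_inner_eq (hD _),
      inner_sub_right, mul_sub, sum_sub_distrib, sum_neg_distrib]
    ring
  · simp only [weightDecay, Fintype.sum_sum_type, Sum.elim_inl, Sum.elim_inr, comp_apply,
      norm_balancedWeight_sq, neg_sq, Real.sq_sqrt (norm_nonneg _), sum_add_distrib]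
    ring

lemma exists_convex_of_network [Fintype ι] [Fintype β] {x : α → E} {D : β → α → ℝ}
    (hD : ∀ v : E, ∃ j, ∀ n, D j n = if 0 ≤ ⟪x n, v⟫ then 1 else 0) (W : ι → E) (w : ι → ℝ) :
    ∃ u u' : β → E, (∀ n, ∑ j, D j n * ⟪x n, u' j - u j⟫ = output W w (x n)) ∧
      (∀ j, IsConsistent x (D j) (u j)) ∧ (∀ j, IsConsistent x (D j) (u' j)) ∧
      ∑ j, (‖u j‖ + ‖u' j‖) ≤ weightDecay W w := by
  classical
  choose J hJ using fun i => hD (W i)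
  have hcons : ∀ j, ∀ i ∈ univ.filter (J · = j), IsConsistent x (D j) (W i) := fun j i hi =>
    (mem_filter.1 hi).2 ▸ isConsistent_of_pattern (hJ i)
  refine ⟨fun j => ∑ i ∈ univ with J i = j, (w i)⁻ • W i,
    fun j => ∑ i ∈ univ with J i = j, (w i)⁺ • W i, fun n => ?_,
    fun j => IsConsistent.sum_smul (fun i _ => negPart_nonneg _) (hcons j),
    fun j => IsConsistent.sum_smul (fun i _ => posPart_nonneg _) (hcons j), ?_⟩
  · rw [output, ← sum_fiberwise univ J]
    refine sum_congr rfl fun j _ => ?_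
    rw [← sum_sub_distrib]
    simp only [← sub_smul, posPart_sub_negPart, inner_sum, mul_sum, real_inner_smul_right]
    refine sum_congr rfl fun i hi => ?_
    rw [← (mem_filter.1 hi).2, hJ i n, mul_left_comm, ite_nonneg_mul_self, mul_comm]
  · have hfiber : ∀ j, ‖∑ i ∈ univ with J i = j, (w i)⁻ • W i‖ +
        ‖∑ i ∈ univ with J i = j, (w i)⁺ • W i‖ ≤ ∑ i ∈ univ with J i = j, |w i| * ‖W i‖ := by
      intro j
      refine (add_le_add (norm_sum_le _ _) (norm_sum_le _ _)).trans_eq ?_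
      rw [← sum_add_distrib]
      refine sum_congr rfl fun i _ => ?_
      rw [norm_smul, norm_smul, Real.norm_of_nonneg (negPart_nonneg _),
        Real.norm_of_nonneg (posPart_nonneg _), ← add_mul, add_comm, posPart_add_negPart]
    calc ∑ j, (‖_‖ + ‖_‖) ≤ ∑ j, ∑ i ∈ univ with J i = j, |w i| * ‖W i‖ :=
          sum_le_sum fun j _ => hfiber j
      _ = ∑ i, |w i| * ‖W i‖ := sum_fiberwise univ J _
      _ ≤ weightDecay W w := sum_abs_mul_norm_le_weightDecay W w

end ReLUNetwork

open ReLUNetwork in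
theorem nonconvex_maxmargin_eq_convex_maxmargin_general
    {N d m p : ℕ}
    (x : Fin N → EuclideanSpace ℝ (Fin d)) (y : Fin N → ℝ)
    (D : Fin p → Fin N → ℝ)
    (hDarr : ∀ j, ∃ w : EuclideanSpace ℝ (Fin d),
      ∀ n, D j n = if 0 ≤ (inner ℝ (x n) w : ℝ) then (1 : ℝ) else 0)
    (hDall : ∀ w : EuclideanSpace ℝ (Fin d),
      ∃ j, ∀ n, D j n = if 0 ≤ (inner ℝ (x n) w : ℝ) then (1 : ℝ) else 0)
    (hm : 2 * p ≤ m) :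
    sInf {v : ℝ | ∃ (W1 : Fin m → EuclideanSpace ℝ (Fin d)) (w2 : Fin m → ℝ),
        (∀ n, 1 ≤ y n * ∑ i, max (inner ℝ (x n) (W1 i) : ℝ) 0 * w2 i) ∧
        v = (1 / 2) * ((∑ i, ‖W1 i‖ ^ 2) + ∑ i, (w2 i) ^ 2)} =
    sInf {v : ℝ | ∃ (u u' : Fin p → EuclideanSpace ℝ (Fin d)),
        (∀ n, 1 ≤ y n * ∑ j, D j n * (inner ℝ (x n) (u' j - u j) : ℝ)) ∧
        (∀ j n, 0 ≤ (2 * D j n - 1) * (inner ℝ (x n) (u j) : ℝ)) ∧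
        (∀ j n, 0 ≤ (2 * D j n - 1) * (inner ℝ (x n) (u' j) : ℝ)) ∧
        v = ∑ j, (‖u j‖ + ‖u' j‖)} := by
  have hD01 : ∀ j n, D j n = 0 ∨ D j n = 1 := fun j n => by
    obtain ⟨w, hw⟩ := hDarr j
    rw [hw n]
    split_ifs <;> simp
  apply csInf_eq_csInf_of_forall_exists_le
  · rintro _ ⟨W, w, hmargin, rfl⟩
    obtain ⟨u, u', hout, hu, hu', hcost⟩ := exists_convex_of_network hDall W w
    exact ⟨_, ⟨u, u', fun n => (hout n).symm ▸ hmargin n, hu, hu', rfl⟩, hcost⟩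
  · rintro _ ⟨u, u', hmargin, hu, hu', rfl⟩
    obtain ⟨W, w, hout, hcost⟩ := exists_network_of_convex hD01 hu hu'
    obtain ⟨W', w', hout', hcost'⟩ := exists_network_of_injective
      ((Fin.castLE_injective (two_mul p ▸ hm)).comp finSumFinEquiv.injective) W w
    refine ⟨_, ⟨W', w', fun n => ?_, rfl⟩, (hcost'.trans hcost).le⟩
    change 1 ≤ y n * output W' w' (x n)
    rw [hout', hout]
    exact hmargin n

/-- With `p = |P|` hyperplane arrangement patterns `D j` of the data matrix
(rows `x n`), and `m ≥ 2p` hidden neurons, the optimal value of the non-convex two-layer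
ReLU max-margin problem equals that of the equivalent convex program. -/
theorem nonconvex_maxmargin_eq_convex_maxmargin
    {N d m p : ℕ}
    (x : Fin N → EuclideanSpace ℝ (Fin d)) (y : Fin N → ℝ)
    (hy : ∀ n, y n = 1 ∨ y n = -1)
    (D : Fin p → Fin N → ℝ)
    (hDarr : ∀ j, ∃ w : EuclideanSpace ℝ (Fin d),
      ∀ n, D j n = if 0 ≤ (inner ℝ (x n) w : ℝ) then (1 : ℝ) else 0)
    (hDall : ∀ w : EuclideanSpace ℝ (Fin d),
      ∃ j, ∀ n, D j n = if 0 ≤ (inner ℝ (x n) w : ℝ) then (1 : ℝ) else 0)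
    (hDinj : Function.Injective D)
    (hm : 2 * p ≤ m) :
    sInf {v : ℝ | ∃ (W1 : Fin m → EuclideanSpace ℝ (Fin d)) (w2 : Fin m → ℝ),
        (∀ n, 1 ≤ y n * ∑ i, max (inner ℝ (x n) (W1 i) : ℝ) 0 * w2 i) ∧
        v = (1 / 2) * ((∑ i, ‖W1 i‖ ^ 2) + ∑ i, (w2 i) ^ 2)} =
    sInf {v : ℝ | ∃ (u u' : Fin p → EuclideanSpace ℝ (Fin d)),
        (∀ n, 1 ≤ y n * ∑ j, D j n * (inner ℝ (x n) (u' j - u j) : ℝ)) ∧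
        (∀ j n, 0 ≤ (2 * D j n - 1) * (inner ℝ (x n) (u j) : ℝ)) ∧
        (∀ j n, 0 ≤ (2 * D j n - 1) * (inner ℝ (x n) (u' j) : ℝ)) ∧
        v = ∑ j, (‖u j‖ + ‖u' j‖)} :=
  nonconvex_maxmargin_eq_convex_maxmargin_general x y D hDarr hDall hm
end
end

section
/- (Weak duality for the convex max-margin program.) Let λ ∈ ℝ^N satisfy y_nλ_n ≥ 0 for all n and |λᵀ(Xu)_+| ≤ 1 for every u ∈ ℝ^d with ‖u‖₂ ≤ 1. Then for every feasible point of the convex max-margin program, i.e. vectors u_1,…,u_p, u_1′,…,u_p′ ∈ ℝ^d with y_n Σ_{j=1}^p (D_j)_{nn} x_nᵀ(u_j′ − u_j) ≥ 1 for all n and (2D_j − I)Xu_j ≥ 0, (2D_j − I)Xu_j′ ≥ 0 entrywise for all j, one has yᵀλ ≤ Σ_{j=1}^p (‖u_j‖₂ + ‖u_j′‖₂). -/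
/-! On each activation cone `(2D_j - I)Xv ≥ 0` the masked linear model `D_j X v` coincides with
the ReLU model `(Xv)_+`, so the margin constraint, weighted by the sign-consistent `λ`, gives
`yᵀλ ≤ Σ_j (λᵀ(Xu_j')_+ - λᵀ(Xu_j)_+)`. The functional `v ↦ λᵀ(Xv)_+` is positively homogeneous,
so dual feasibility on the unit ball bounds it in absolute value by `‖v‖` everywhere. -/

open RealInnerProductSpace

section

variable {ι E : Type*} [Fintype ι] [NormedAddCommGroup E] [InnerProductSpace ℝ E]

/-- `v ↦ λᵀ(Xv)_+` for the data matrix with rows `x n`. -/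
def reluPairing (x : ι → E) (lam : ι → ℝ) (v : E) : ℝ :=
  ∑ n, lam n * max ⟪x n, v⟫ 0

theorem reluPairing_smul_of_nonneg (x : ι → E) (lam : ι → ℝ) {c : ℝ} (hc : 0 ≤ c) (v : E) :
    reluPairing x lam (c • v) = c * reluPairing x lam v := by
  simp only [reluPairing, Finset.mul_sum, real_inner_smul_right]
  refine Finset.sum_congr rfl fun n _ => ?_
  rw [mul_left_comm, mul_max_of_nonneg _ _ hc, mul_zero]

end

theorem abs_le_norm_of_abs_le_one_of_smul_of_nonneg {E : Type*} [NormedAddCommGroup E]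
    [NormedSpace ℝ E] {f : E → ℝ} (hsmul : ∀ c : ℝ, 0 ≤ c → ∀ v, f (c • v) = c * f v)
    (hball : ∀ u, ‖u‖ ≤ 1 → |f u| ≤ 1) (v : E) : |f v| ≤ ‖v‖ := by
  rcases eq_or_ne v 0 with rfl | hv
  · simpa using hsmul 0 le_rfl 0
  have hv' : 0 < ‖v‖ := norm_pos_iff.mpr hv
  have hunit : ‖‖v‖⁻¹ • v‖ ≤ 1 := by
    rw [norm_smul, norm_inv, norm_norm, inv_mul_cancel₀ hv'.ne']
  calc |f v| = ‖v‖ * |f (‖v‖⁻¹ • v)| := by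
        rw [hsmul _ (inv_nonneg.mpr hv'.le), abs_mul, abs_of_pos (inv_pos.mpr hv'),
          mul_inv_cancel_left₀ hv'.ne']
    _ ≤ ‖v‖ * 1 := mul_le_mul_of_nonneg_left (hball _ hunit) hv'.le
    _ = ‖v‖ := mul_one _

theorem mul_eq_max_zero_of_nonneg_mul {a t : ℝ} (ha : a = 0 ∨ a = 1)
    (hcone : 0 ≤ (2 * a - 1) * t) : a * t = max t 0 := by
  rcases ha with rfl | rfl
  · rw [max_eq_right (by linarith), zero_mul]
  · rw [max_eq_left (by linarith), one_mul]

theorem mul_le_mul_of_sign {y l s : ℝ} (hy : y * y = 1) (hl : 0 ≤ y * l) (hs : 1 ≤ y * s) :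
    y * l ≤ l * s := by
  nlinarith [mul_le_mul_of_nonneg_left hs hl]

section

variable {ι κ E : Type*} [Fintype ι] [Fintype κ] [NormedAddCommGroup E] [InnerProductSpace ℝ E]

theorem sum_mul_sum_masked_inner_eq {x : ι → E} {D : κ → ι → ℝ} (lam : ι → ℝ)
    (hD : ∀ j n, D j n = 0 ∨ D j n = 1) {u u' : κ → E}
    (hcone : ∀ j n, 0 ≤ (2 * D j n - 1) * ⟪x n, u j⟫)
    (hcone' : ∀ j n, 0 ≤ (2 * D j n - 1) * ⟪x n, u' j⟫) :
    ∑ n, lam n * ∑ j, D j n * ⟪x n, u' j - u j⟫ =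
      ∑ j, (reluPairing x lam (u' j) - reluPairing x lam (u j)) := by
  simp only [reluPairing, ← Finset.sum_sub_distrib, Finset.mul_sum]
  rw [Finset.sum_comm]
  refine Finset.sum_congr rfl fun j _ => Finset.sum_congr rfl fun n _ => ?_
  rw [inner_sub_right, mul_sub, mul_eq_max_zero_of_nonneg_mul (hD j n) (hcone j n),
    mul_eq_max_zero_of_nonneg_mul (hD j n) (hcone' j n), mul_sub]

end

theorem weak_duality_convex_maxmargin_general
    {N d p : ℕ}
    (x : Fin N → EuclideanSpace ℝ (Fin d)) (y : Fin N → ℝ)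
    (hy : ∀ n, y n = 1 ∨ y n = -1)
    (D : Fin p → Fin N → ℝ)
    (hDarr : ∀ j, ∃ w : EuclideanSpace ℝ (Fin d),
      ∀ n, D j n = if 0 ≤ (inner ℝ (x n) w : ℝ) then (1 : ℝ) else 0)
    (lam : Fin N → ℝ)
    (hlam_sign : ∀ n, 0 ≤ y n * lam n)
    (hlam_feas : ∀ u : EuclideanSpace ℝ (Fin d), ‖u‖ ≤ 1 →
      |∑ n, lam n * max (inner ℝ (x n) u : ℝ) 0| ≤ 1)
    (u u' : Fin p → EuclideanSpace ℝ (Fin d))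
    (hmargin : ∀ n, 1 ≤ y n * ∑ j, D j n * (inner ℝ (x n) (u' j - u j) : ℝ))
    (hcone : ∀ j n, 0 ≤ (2 * D j n - 1) * (inner ℝ (x n) (u j) : ℝ))
    (hcone' : ∀ j n, 0 ≤ (2 * D j n - 1) * (inner ℝ (x n) (u' j) : ℝ)) :
    ∑ n, y n * lam n ≤ ∑ j, (‖u j‖ + ‖u' j‖) := by
  have hD : ∀ j n, D j n = 0 ∨ D j n = 1 := fun j n => by
    obtain ⟨w, hw⟩ := hDarr j
    rw [hw n]
    split_ifs <;> simp
  have hy_sq : ∀ n, y n * y n = 1 := fun n => by rcases hy n with h | h <;> simp [h]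
  have hbound : ∀ v, |reluPairing x lam v| ≤ ‖v‖ :=
    abs_le_norm_of_abs_le_one_of_smul_of_nonneg
      (fun _ hc v => reluPairing_smul_of_nonneg x lam hc v) hlam_feas
  calc ∑ n, y n * lam n
      ≤ ∑ n, lam n * ∑ j, D j n * ⟪x n, u' j - u j⟫ :=
        Finset.sum_le_sum fun n _ => mul_le_mul_of_sign (hy_sq n) (hlam_sign n) (hmargin n)
    _ = ∑ j, (reluPairing x lam (u' j) - reluPairing x lam (u j)) :=
        sum_mul_sum_masked_inner_eq lam hD hcone hcone'
    _ ≤ ∑ j, (‖u j‖ + ‖u' j‖) := Finset.sum_le_sum fun j _ => by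
        linarith [(abs_le.mp (hbound (u j))).1, (abs_le.mp (hbound (u' j))).2]

/-- Weak duality for the convex max-margin program. If `λ` is dual feasible
(`y n * λ n ≥ 0` and `|λᵀ(Xu)₊| ≤ 1` for all unit-ball `u`), then `yᵀλ` lower bounds the
objective of any feasible point of the convex max-margin program. -/
theorem weak_duality_convex_maxmargin
    {N d p : ℕ}
    (x : Fin N → EuclideanSpace ℝ (Fin d)) (y : Fin N → ℝ)
    (hy : ∀ n, y n = 1 ∨ y n = -1)
    (D : Fin p → Fin N → ℝ)
    (hDarr : ∀ j, ∃ w : EuclideanSpace ℝ (Fin d),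
      ∀ n, D j n = if 0 ≤ (inner ℝ (x n) w : ℝ) then (1 : ℝ) else 0)
    (hDall : ∀ w : EuclideanSpace ℝ (Fin d),
      ∃ j, ∀ n, D j n = if 0 ≤ (inner ℝ (x n) w : ℝ) then (1 : ℝ) else 0)
    (hDinj : Function.Injective D)
    (lam : Fin N → ℝ)
    (hlam_sign : ∀ n, 0 ≤ y n * lam n)
    (hlam_feas : ∀ u : EuclideanSpace ℝ (Fin d), ‖u‖ ≤ 1 →
      |∑ n, lam n * max (inner ℝ (x n) u : ℝ) 0| ≤ 1)
    (u u' : Fin p → EuclideanSpace ℝ (Fin d))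
    (hmargin : ∀ n, 1 ≤ y n * ∑ j, D j n * (inner ℝ (x n) (u' j - u j) : ℝ))
    (hcone : ∀ j n, 0 ≤ (2 * D j n - 1) * (inner ℝ (x n) (u j) : ℝ))
    (hcone' : ∀ j n, 0 ≤ (2 * D j n - 1) * (inner ℝ (x n) (u' j) : ℝ)) :
    ∑ n, y n * lam n ≤ ∑ j, (‖u j‖ + ‖u' j‖) :=
  weak_duality_convex_maxmargin_general x y hy D hDarr lam hlam_sign hlam_feas u u' hmargin hcone
    hcone'
end

section
/- For every λ ∈ ℝ^N the following are equivalent: (i) |λᵀ(Xu)_+| ≤ 1 for all u ∈ ℝ^d with ‖u‖₂ ≤ 1; (ii) for every D ∈ P and every u ∈ ℝ^d with ‖u‖₂ ≤ 1 and (2D − I)Xu ≥ 0 entrywise, |λᵀD Xu| ≤ 1. -/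
/-! On the cone `{u | (2D − I)Xu ≥ 0}` of a pattern `D`, the linear map `u ↦ DXu` agrees with
`u ↦ (Xu)₊`, and every `u` lies in the cone of its own pattern `diag(𝟙(Xu ≥ 0))`. Hence the two
families of constraints bound the same numbers. -/

lemma mul_eq_max_zero_of_sign_consistent {δ z : ℝ} (hδ : δ = 0 ∨ δ = 1)
    (h : 0 ≤ (2 * δ - 1) * z) : δ * z = max z 0 := by
  rcases hδ with rfl | rfl
  · rw [max_eq_right (by linarith), zero_mul]
  · rw [max_eq_left (by linarith), one_mul]

lemma ite_nonneg_eq_zero_or_one (z : ℝ) :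
    (if 0 ≤ z then (1 : ℝ) else 0) = 0 ∨ (if 0 ≤ z then (1 : ℝ) else 0) = 1 := by
  split_ifs <;> simp

lemma sign_consistent_ite_nonneg (z : ℝ) :
    0 ≤ (2 * (if 0 ≤ z then (1 : ℝ) else 0) - 1) * z := by
  split_ifs with hz
  · linarith
  · linarith [not_le.mp hz]

/-- Dual feasibility `|λᵀ(Xu)₊| ≤ 1` over the unit ball is equivalent to the
family of conic constraints `|λᵀ D X u| ≤ 1` over all hyperplane arrangement patterns
`D ∈ P` and unit-ball `u` with `(2D − I)Xu ≥ 0`. -/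
theorem dual_feasibility_iff_arrangement_constraints
    {N d : ℕ}
    (x : Fin N → EuclideanSpace ℝ (Fin d))
    (lam : Fin N → ℝ) :
    (∀ u : EuclideanSpace ℝ (Fin d), ‖u‖ ≤ 1 →
        |∑ n, lam n * max (inner ℝ (x n) u : ℝ) 0| ≤ 1) ↔
    (∀ D : Fin N → ℝ,
        (∃ w : EuclideanSpace ℝ (Fin d),
          ∀ n, D n = if 0 ≤ (inner ℝ (x n) w : ℝ) then (1 : ℝ) else 0) →
        ∀ u : EuclideanSpace ℝ (Fin d), ‖u‖ ≤ 1 →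
          (∀ n, 0 ≤ (2 * D n - 1) * (inner ℝ (x n) u : ℝ)) →
          |∑ n, lam n * (D n * (inner ℝ (x n) u : ℝ))| ≤ 1) := by
  constructor
  · rintro h D ⟨w, hw⟩ u hu hcone
    have hD : ∀ n, D n = 0 ∨ D n = 1 := fun n => hw n ▸ ite_nonneg_eq_zero_or_one _
    have key : ∀ n, D n * inner ℝ (x n) u = max (inner ℝ (x n) u) 0 :=
      fun n => mul_eq_max_zero_of_sign_consistent (hD n) (hcone n)
    simpa only [key] using h u hu
  · intro h u hu
    set D : Fin N → ℝ := fun n => if 0 ≤ (inner ℝ (x n) u : ℝ) then (1 : ℝ) else 0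
    have hcone : ∀ n, 0 ≤ (2 * D n - 1) * inner ℝ (x n) u :=
      fun n => sign_consistent_ite_nonneg _
    have key : ∀ n, D n * inner ℝ (x n) u = max (inner ℝ (x n) u) 0 :=
      fun n => mul_eq_max_zero_of_sign_consistent (ite_nonneg_eq_zero_or_one _) (hcone n)
    simpa only [key] using h D ⟨u, fun n => rfl⟩ u hu hcone
end

section
/- Let λ ∈ ℝ^N and let D̂_0 and D be diagonal N×N matrices with entries in {0,1}. Suppose u_0 = XᵀD̂_0λ satisfies ‖u_0‖₂ ≤ 1, and suppose D_{nn} = (D̂_0)_{nn} for every n with λ_n > 0. Then for every u ∈ ℝ^d with ‖u‖₂ ≤ 1 and (2D − I)Xu ≥ 0 entrywise, λᵀD Xu ≤ 1. -/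
/-!
On a coordinate with `λ_n > 0` the patterns `D` and `D̂₀` agree. On a coordinate with
`λ_n ≤ 0`, the sign condition `(2D - I)Xu ≥ 0` says that `D_{nn} ⟪x_n, u⟫` is the positive part of
`⟪x_n, u⟫`, which dominates `(D̂₀)_{nn} ⟪x_n, u⟫`. Hence `λᵀ D X u ≤ λᵀ D̂₀ X u = ⟪u₀, u⟫`, and
Cauchy–Schwarz bounds the latter by `‖u₀‖ ‖u‖ ≤ 1`.
-/

lemma mul_le_posPart_of_eq_zero_or_one {a s : ℝ} (ha : a = 0 ∨ a = 1) : a * s ≤ s⁺ := by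
  rcases ha with rfl | rfl
  · simp
  · simpa using le_posPart s

lemma mul_eq_posPart_of_sign {b s : ℝ} (hb : b = 0 ∨ b = 1) (hs : 0 ≤ (2 * b - 1) * s) :
    b * s = s⁺ := by
  rcases hb with rfl | rfl
  · have : s ≤ 0 := by linarith
    simp [posPart_eq_zero.mpr this]
  · have : 0 ≤ s := by linarith
    simp [posPart_eq_self.mpr this]

lemma mul_le_mul_of_sign_s5 {a b s : ℝ} (ha : a = 0 ∨ a = 1) (hb : b = 0 ∨ b = 1)
    (hs : 0 ≤ (2 * b - 1) * s) : a * s ≤ b * s :=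
  (mul_eq_posPart_of_sign hb hs).symm ▸ mul_le_posPart_of_eq_zero_or_one ha

lemma mul_mul_le_of_agree_of_sign {l a b s : ℝ} (ha : a = 0 ∨ a = 1) (hb : b = 0 ∨ b = 1)
    (hs : 0 ≤ (2 * b - 1) * s) (hagree : 0 < l → b = a) : l * (b * s) ≤ l * (a * s) := by
  rcases lt_or_ge 0 l with hl | hl
  · rw [hagree hl]
  · exact mul_le_mul_of_nonpos_left (mul_le_mul_of_sign_s5 ha hb hs) hl

lemma real_inner_le_one_of_norm_le_one {E : Type*} [NormedAddCommGroup E] [InnerProductSpace ℝ E]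
    {v w : E} (hv : ‖v‖ ≤ 1) (hw : ‖w‖ ≤ 1) : inner ℝ v w ≤ 1 :=
  calc inner ℝ v w ≤ ‖v‖ * ‖w‖ := real_inner_le_norm v w
    _ ≤ 1 := mul_le_one₀ hv (norm_nonneg w) hw

/-- Lemma `lem:neg`: if `u₀ = Xᵀ D̂₀ λ` has norm at most one and the 0/1
diagonal pattern `D` agrees with `D̂₀` on every coordinate where `λ_n > 0`, then
`λᵀ D X u ≤ 1` for every `u` in the unit ball with `(2D − I)Xu ≥ 0`. -/
theorem arrangement_constraint_of_agreement_on_positive_part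
    {N d : ℕ}
    (x : Fin N → EuclideanSpace ℝ (Fin d))
    (lam : Fin N → ℝ)
    (D0 D : Fin N → ℝ)
    (hD0 : ∀ n, D0 n = 0 ∨ D0 n = 1)
    (hD : ∀ n, D n = 0 ∨ D n = 1)
    (u0 : EuclideanSpace ℝ (Fin d))
    (hu0 : u0 = ∑ n, (D0 n * lam n) • x n)
    (hu0norm : ‖u0‖ ≤ 1)
    (hagree : ∀ n, 0 < lam n → D n = D0 n) :
    ∀ u : EuclideanSpace ℝ (Fin d), ‖u‖ ≤ 1 →
      (∀ n, 0 ≤ (2 * D n - 1) * (inner ℝ (x n) u : ℝ)) →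
      ∑ n, lam n * (D n * (inner ℝ (x n) u : ℝ)) ≤ 1 := by
  intro u hu hsign
  calc ∑ n, lam n * (D n * inner ℝ (x n) u)
      ≤ ∑ n, lam n * (D0 n * inner ℝ (x n) u) := Finset.sum_le_sum fun n _ =>
        mul_mul_le_of_agree_of_sign (hD0 n) (hD n) (hsign n) (hagree n)
    _ = inner ℝ u0 u := by
        simp only [hu0, sum_inner, real_inner_smul_left]
        exact Finset.sum_congr rfl fun n _ => by ring
    _ ≤ 1 := real_inner_le_one_of_norm_le_one hu0norm hu
end

section
/- Assume the dataset (X,y) is orthogonally separable and let λ ∈ ℝ^N satisfy y_nλ_n ≥ 0 for all n. Let D̂_0 and D be diagonal N×N matrices with entries in {0,1} such that D_{nn} ≤ (D̂_0)_{nn} for all n. Then ‖XᵀDλ‖₂ ≤ ‖XᵀD̂_0λ‖₂. -/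
/-!
Put `v n = λ_n x_n`. Orthogonal separability together with `y_n λ_n ≥ 0` makes all the inner
products `⟪v n, v m⟫` nonnegative. Splitting `XᵀD̂₀λ = XᵀDλ + Xᵀ(D̂₀ - D)λ`, both summands are
nonnegative combinations of the `v n`, so they have nonnegative inner product, and adding a vector
at a nonobtuse angle cannot decrease the norm.
-/

open Finset RealInnerProductSpace

section InnerProductSpace

variable {E ι : Type*} [NormedAddCommGroup E] [InnerProductSpace ℝ E]

theorem norm_le_norm_add_of_inner_nonneg {u w : E} (h : 0 ≤ ⟪u, w⟫) : ‖u‖ ≤ ‖u + w‖ := by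
  have hsq : ‖u‖ ^ 2 ≤ ‖u + w‖ ^ 2 := by
    rw [norm_add_sq_real]
    nlinarith [sq_nonneg ‖w‖]
  exact pow_le_pow_iff_left₀ (norm_nonneg _) (norm_nonneg _) two_ne_zero |>.mp hsq

theorem inner_sum_smul_sum_smul_nonneg {s : Finset ι} {v : ι → E} {a b : ι → ℝ}
    (hv : ∀ i ∈ s, ∀ j ∈ s, 0 ≤ ⟪v i, v j⟫) (ha : ∀ i ∈ s, 0 ≤ a i) (hb : ∀ j ∈ s, 0 ≤ b j) :
    0 ≤ ⟪∑ i ∈ s, a i • v i, ∑ j ∈ s, b j • v j⟫ := by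
  rw [sum_inner]
  refine sum_nonneg fun i hi => ?_
  rw [inner_sum]
  refine sum_nonneg fun j hj => ?_
  rw [real_inner_smul_left, real_inner_smul_right]
  exact mul_nonneg (ha i hi) (mul_nonneg (hb j hj) (hv i hi j hj))

theorem norm_sum_smul_le_of_le {s : Finset ι} {v : ι → E} {a b : ι → ℝ}
    (hv : ∀ i ∈ s, ∀ j ∈ s, 0 ≤ ⟪v i, v j⟫) (ha : ∀ i ∈ s, 0 ≤ a i)
    (hab : ∀ i ∈ s, a i ≤ b i) :
    ‖∑ i ∈ s, a i • v i‖ ≤ ‖∑ i ∈ s, b i • v i‖ := by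
  have hsplit : ∑ i ∈ s, b i • v i = ∑ i ∈ s, a i • v i + ∑ i ∈ s, (b i - a i) • v i := by
    rw [← sum_add_distrib]
    exact sum_congr rfl fun i _ => by rw [← add_smul, add_sub_cancel]
  rw [hsplit]
  exact norm_le_norm_add_of_inner_nonneg <|
    inner_sum_smul_sum_smul_nonneg hv ha fun i hi => sub_nonneg.mpr (hab i hi)

end InnerProductSpace

section OrthogonallySeparable

variable {E ι : Type*} [NormedAddCommGroup E] [InnerProductSpace ℝ E]
  {x : ι → E} {y : ι → ℝ}

theorem label_mul_label_mul_inner_nonneg (hy : ∀ n, y n = 1 ∨ y n = -1)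
    (hsep_same : ∀ n n', y n = y n' → 0 < ⟪x n, x n'⟫)
    (hsep_diff : ∀ n n', y n ≠ y n' → ⟪x n, x n'⟫ ≤ 0) (n m : ι) :
    0 ≤ y n * y m * ⟪x n, x m⟫ := by
  by_cases h : y n = y m
  · have hyy : y n * y m = 1 := by rw [← h]; rcases hy n with h1 | h1 <;> rw [h1] <;> norm_num
    rw [hyy, one_mul]
    exact (hsep_same n m h).le
  · have hyy : y n * y m = -1 := by
      rcases hy n with h1 | h1 <;> rcases hy m with h2 | h2 <;> simp_all
    rw [hyy, neg_one_mul, neg_nonneg]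
    exact hsep_diff n m h

theorem inner_smul_smul_nonneg_of_sign (hy : ∀ n, y n = 1 ∨ y n = -1)
    (hsep_same : ∀ n n', y n = y n' → 0 < ⟪x n, x n'⟫)
    (hsep_diff : ∀ n n', y n ≠ y n' → ⟪x n, x n'⟫ ≤ 0)
    {lam : ι → ℝ} (hlam_sign : ∀ n, 0 ≤ y n * lam n) (n m : ι) :
    0 ≤ ⟪lam n • x n, lam m • x m⟫ := by
  have hsq : ∀ k, y k * y k = 1 := fun k => by rcases hy k with h | h <;> rw [h] <;> norm_num
  -- `λ_n λ_m = (y_n λ_n)(y_m λ_m) · y_n y_m` because `y_n² = y_m² = 1`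
  have hrw : ⟪lam n • x n, lam m • x m⟫
      = (y n * lam n) * (y m * lam m) * (y n * y m * ⟪x n, x m⟫) := by
    rw [real_inner_smul_left, real_inner_smul_right]
    linear_combination (lam n * lam m * ⟪x n, x m⟫) * (-(hsq n) * y m * y m - hsq m)
  rw [hrw]
  exact mul_nonneg (mul_nonneg (hlam_sign n) (hlam_sign m))
    (label_mul_label_mul_inner_nonneg hy hsep_same hsep_diff n m)

end OrthogonallySeparable

theorem norm_mono_of_orthogonal_separable_general
    {N d : ℕ}
    (x : Fin N → EuclideanSpace ℝ (Fin d)) (y : Fin N → ℝ)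
    (hy : ∀ n, y n = 1 ∨ y n = -1)
    (hsep_same : ∀ n n', y n = y n' → 0 < (inner ℝ (x n) (x n') : ℝ))
    (hsep_diff : ∀ n n', y n ≠ y n' → (inner ℝ (x n) (x n') : ℝ) ≤ 0)
    (lam : Fin N → ℝ)
    (hlam_sign : ∀ n, 0 ≤ y n * lam n)
    (D0 D : Fin N → ℝ)
    (hD : ∀ n, D n = 0 ∨ D n = 1)
    (hle : ∀ n, D n ≤ D0 n) :
    ‖∑ n, (D n * lam n) • x n‖ ≤ ‖∑ n, (D0 n * lam n) • x n‖ := by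
  have hv : ∀ n ∈ univ, ∀ m ∈ univ, 0 ≤ ⟪lam n • x n, lam m • x m⟫ := fun n _ m _ =>
    inner_smul_smul_nonneg_of_sign hy hsep_same hsep_diff hlam_sign n m
  have hD_nonneg : ∀ n ∈ univ, 0 ≤ D n := fun n _ => by rcases hD n with h | h <;> simp [h]
  simpa only [mul_smul] using norm_sum_smul_le_of_le hv hD_nonneg fun n _ => hle n

/-- Lemma `lem:lower`: for orthogonally separable data and a dual-sign-consistent
`λ`, shrinking the 0/1 diagonal pattern entrywise can only decrease `‖Xᵀ D λ‖₂`. -/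
theorem norm_mono_of_orthogonal_separable
    {N d : ℕ}
    (x : Fin N → EuclideanSpace ℝ (Fin d)) (y : Fin N → ℝ)
    (hy : ∀ n, y n = 1 ∨ y n = -1)
    (hsep_same : ∀ n n', y n = y n' → 0 < (inner ℝ (x n) (x n') : ℝ))
    (hsep_diff : ∀ n n', y n ≠ y n' → (inner ℝ (x n) (x n') : ℝ) ≤ 0)
    (lam : Fin N → ℝ)
    (hlam_sign : ∀ n, 0 ≤ y n * lam n)
    (D0 D : Fin N → ℝ)
    (hD0 : ∀ n, D0 n = 0 ∨ D0 n = 1)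
    (hD : ∀ n, D n = 0 ∨ D n = 1)
    (hle : ∀ n, D n ≤ D0 n) :
    ‖∑ n, (D n * lam n) • x n‖ ≤ ‖∑ n, (D0 n * lam n) • x n‖ :=
  norm_mono_of_orthogonal_separable_general x y hy hsep_same hsep_diff lam hlam_sign D0 D hD hle
end

section
/- Assume the dataset (X,y) is orthogonally separable and let λ ∈ ℝ^N satisfy y_nλ_n ≥ 0 for all n. Suppose there exist diagonal N×N matrices D_+ and D_− with entries in {0,1} such that (D_+)_{nn} = 1 whenever y_n = 1, (D_−)_{nn} = 1 whenever y_n = −1, ‖XᵀD_+λ‖₂ ≤ 1, and ‖XᵀD_−λ‖₂ ≤ 1. Then λ is dual feasible: |λᵀ(Xu)_+| ≤ 1 for every u ∈ ℝ^d with ‖u‖₂ ≤ 1. -/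
/-!
Orthogonal separability and `y n * λ n ≥ 0` make the vectors `λ n • x n` pairwise at
nonnegative inner product, so every subsum of `Xᵀ D λ` is no longer than `Xᵀ D λ` itself.
The ReLU sum `∑ λ n (⟪x n, u⟫)₊` splits into a nonnegative part over the positive class and a
nonpositive part over the negative class. Each part is `⟪w, u⟫` for the subsum `w` over the
indices of its class with `⟪x n, u⟫ > 0`, a subsum of `Xᵀ D₊ λ` resp. `Xᵀ D₋ λ`; hence both
parts lie in `[-1, 1]` and, having opposite signs, so does their sum.
-/

open Finset

section InnerProductSpace

variable {E : Type*} [NormedAddCommGroup E] [InnerProductSpace ℝ E]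

theorem norm_le_norm_add_of_inner_nonneg_s7 {a b : E} (h : 0 ≤ inner ℝ a b) :
    ‖a‖ ≤ ‖a + b‖ := by
  have hsq : ‖a + b‖ ^ 2 = ‖a‖ ^ 2 + 2 * inner ℝ a b + ‖b‖ ^ 2 := norm_add_sq_real a b
  exact (sq_le_sq₀ (norm_nonneg _) (norm_nonneg _)).mp (by nlinarith [sq_nonneg ‖b‖])

theorem norm_sum_le_norm_sum_of_subset_of_inner_nonneg {ι : Type*} {v : ι → E}
    {s t : Finset ι} (hst : s ⊆ t) (h : ∀ i ∈ t, ∀ j ∈ t, 0 ≤ inner ℝ (v i) (v j)) :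
    ‖∑ i ∈ s, v i‖ ≤ ‖∑ i ∈ t, v i‖ := by
  classical
  rw [← sum_sdiff hst, add_comm]
  refine norm_le_norm_add_of_inner_nonneg_s7 ?_
  rw [sum_inner]
  refine sum_nonneg fun i hi => ?_
  rw [inner_sum]
  exact sum_nonneg fun j hj => h i (hst hi) j (sdiff_subset hj)

theorem sum_mul_max_inner_zero_eq_inner {ι : Type*} (s : Finset ι) (c : ι → ℝ) (x : ι → E)
    (u : E) :
    ∑ i ∈ s, c i * max (inner ℝ (x i) u) 0 =
      inner ℝ (∑ i ∈ s with 0 < inner ℝ (x i) u, c i • x i) u := by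
  rw [sum_inner, sum_filter]
  refine sum_congr rfl fun i _ => ?_
  split_ifs with hpos
  · rw [max_eq_left hpos.le, real_inner_smul_left]
  · rw [max_eq_right (not_lt.mp hpos), mul_zero]

theorem abs_sum_mul_max_inner_zero_le {ι : Type*} {s t : Finset ι} (hst : s ⊆ t)
    (c : ι → ℝ) (x : ι → E) (h : ∀ i ∈ t, ∀ j ∈ t, 0 ≤ inner ℝ (c i • x i) (c j • x j))
    (u : E) :
    |∑ i ∈ s, c i * max (inner ℝ (x i) u) 0| ≤ ‖∑ i ∈ t, c i • x i‖ * ‖u‖ := by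
  rw [sum_mul_max_inner_zero_eq_inner]
  refine (abs_real_inner_le_norm _ _).trans (mul_le_mul_of_nonneg_right ?_ (norm_nonneg u))
  exact norm_sum_le_norm_sum_of_subset_of_inner_nonneg ((filter_subset _ _).trans hst) h

end InnerProductSpace

theorem sum_mul_smul_eq_sum_filter {ι M : Type*} [AddCommMonoid M] [Module ℝ M]
    (s : Finset ι) {D : ι → ℝ} (hD : ∀ i, D i = 0 ∨ D i = 1) (c : ι → ℝ) (x : ι → M) :
    ∑ i ∈ s, (D i * c i) • x i = ∑ i ∈ s with D i = 1, c i • x i := by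
  rw [sum_filter]
  refine sum_congr rfl fun i _ => ?_
  rcases hD i with h | h <;> simp [h]

section OrthogonallySeparable

variable {ι E : Type*} [NormedAddCommGroup E] [InnerProductSpace ℝ E] {x : ι → E} {y : ι → ℝ}

theorem mul_mul_inner_nonneg_of_orthogonal_separable (hy : ∀ n, y n = 1 ∨ y n = -1)
    (hsep_same : ∀ n n', y n = y n' → 0 < inner ℝ (x n) (x n'))
    (hsep_diff : ∀ n n', y n ≠ y n' → inner ℝ (x n) (x n') ≤ 0) (n m : ι) :
    0 ≤ y n * y m * inner ℝ (x n) (x m) := by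
  by_cases hnm : y n = y m
  · have hyy : y n * y m = 1 := by rw [← hnm]; rcases hy n with h | h <;> rw [h] <;> norm_num
    rw [hyy, one_mul]
    exact (hsep_same n m hnm).le
  · have hyy : y n * y m = -1 := by
      rcases hy n with h | h <;> rcases hy m with h' | h' <;> simp_all
    rw [hyy, neg_one_mul, neg_nonneg]
    exact hsep_diff n m hnm

/-- Since `y n ^ 2 = 1`, the product `λ n λ m ⟪x n, x m⟫` factors as
`(y n λ n) (y m λ m) (y n y m ⟪x n, x m⟫)`, a product of three nonnegative numbers. -/
theorem inner_smul_smul_nonneg_of_orthogonal_separable (hy : ∀ n, y n = 1 ∨ y n = -1)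
    (hsep_same : ∀ n n', y n = y n' → 0 < inner ℝ (x n) (x n'))
    (hsep_diff : ∀ n n', y n ≠ y n' → inner ℝ (x n) (x n') ≤ 0)
    {lam : ι → ℝ} (hlam_sign : ∀ n, 0 ≤ y n * lam n) (n m : ι) :
    0 ≤ inner ℝ (lam n • x n) (lam m • x m) := by
  have hsq : ∀ k, y k * y k = 1 := fun k => by rcases hy k with h | h <;> rw [h] <;> norm_num
  have hfactor : inner ℝ (lam n • x n) (lam m • x m) =
      (y n * lam n) * (y m * lam m) * (y n * y m * inner ℝ (x n) (x m)) := by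
    rw [real_inner_smul_left, real_inner_smul_right]
    calc lam n * (lam m * inner ℝ (x n) (x m))
        = (y n * y n) * (y m * y m) * (lam n * (lam m * inner ℝ (x n) (x m))) := by
          rw [hsq, hsq, one_mul, one_mul]
      _ = (y n * lam n) * (y m * lam m) * (y n * y m * inner ℝ (x n) (x m)) := by ring
  rw [hfactor]
  exact mul_nonneg (mul_nonneg (hlam_sign n) (hlam_sign m))
    (mul_mul_inner_nonneg_of_orthogonal_separable hy hsep_same hsep_diff n m)

end OrthogonallySeparable

/-- Proposition `prop:dual_ortho`: on orthogonally separable data, if the 0/1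
patterns `D₊, D₋` cover the positive and negative labels respectively and `‖Xᵀ D₊ λ‖ ≤ 1`,
`‖Xᵀ D₋ λ‖ ≤ 1`, then `λ` is dual feasible. -/
theorem dual_feasible_of_orthogonal_separable
    {N d : ℕ}
    (x : Fin N → EuclideanSpace ℝ (Fin d)) (y : Fin N → ℝ)
    (hy : ∀ n, y n = 1 ∨ y n = -1)
    (hsep_same : ∀ n n', y n = y n' → 0 < (inner ℝ (x n) (x n') : ℝ))
    (hsep_diff : ∀ n n', y n ≠ y n' → (inner ℝ (x n) (x n') : ℝ) ≤ 0)
    (lam : Fin N → ℝ)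
    (hlam_sign : ∀ n, 0 ≤ y n * lam n)
    (Dp Dm : Fin N → ℝ)
    (hDp01 : ∀ n, Dp n = 0 ∨ Dp n = 1)
    (hDm01 : ∀ n, Dm n = 0 ∨ Dm n = 1)
    (hDp : ∀ n, y n = 1 → Dp n = 1)
    (hDm : ∀ n, y n = -1 → Dm n = 1)
    (hDpnorm : ‖∑ n, (Dp n * lam n) • x n‖ ≤ 1)
    (hDmnorm : ‖∑ n, (Dm n * lam n) • x n‖ ≤ 1) :
    ∀ u : EuclideanSpace ℝ (Fin d), ‖u‖ ≤ 1 →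
      |∑ n, lam n * max (inner ℝ (x n) u : ℝ) 0| ≤ 1 := by
  intro u hu
  have hpair : ∀ n m, 0 ≤ inner ℝ (lam n • x n) (lam m • x m) :=
    inner_smul_smul_nonneg_of_orthogonal_separable hy hsep_same hsep_diff hlam_sign
  have hclass : ∀ (s : Finset (Fin N)) (D : Fin N → ℝ), (∀ n, D n = 0 ∨ D n = 1) →
      ‖∑ n, (D n * lam n) • x n‖ ≤ 1 → (∀ n ∈ s, D n = 1) →
      |∑ n ∈ s, lam n * max (inner ℝ (x n) u) 0| ≤ 1 := by
    intro s D hD01 hDnorm hDs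
    refine (abs_sum_mul_max_inner_zero_le (t := univ.filter (D · = 1))
      (fun n hn => mem_filter.mpr ⟨mem_univ n, hDs n hn⟩) lam x (fun n _ m _ => hpair n m)
      u).trans ?_
    rw [← sum_mul_smul_eq_sum_filter _ hD01]
    exact mul_le_one₀ hDnorm (norm_nonneg u) hu
  have hneg : ∀ n, y n ≠ 1 → y n = -1 := fun n h => (hy n).resolve_left h
  set P := ∑ n with y n = 1, lam n * max (inner ℝ (x n) u) 0
  set M := ∑ n with y n ≠ 1, lam n * max (inner ℝ (x n) u) 0
  have hP_nonneg : 0 ≤ P := sum_nonneg fun n hn => mul_nonneg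
    (by simpa [(mem_filter.mp hn).2] using hlam_sign n) (le_max_right _ _)
  have hM_nonpos : M ≤ 0 := sum_nonpos fun n hn => mul_nonpos_of_nonpos_of_nonneg
    (by simpa [hneg n (mem_filter.mp hn).2] using hlam_sign n) (le_max_right _ _)
  have hP_le : |P| ≤ 1 := hclass _ Dp hDp01 hDpnorm fun n hn => hDp n (mem_filter.mp hn).2
  have hM_le : |M| ≤ 1 :=
    hclass _ Dm hDm01 hDmnorm fun n hn => hDm n (hneg n (mem_filter.mp hn).2)
  rw [← sum_filter_add_sum_filter_not univ (y · = 1)]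
  rw [abs_le] at hP_le hM_le ⊢
  constructor <;> linarith
end

section
/- Assume X is spike-free and let λ ∈ ℝ^N satisfy y_nλ_n ≥ 0 for all n. Suppose there exist diagonal N×N matrices D_+ and D_− with entries in {0,1} such that (D_+)_{nn} = 1 whenever y_n = 1, (D_−)_{nn} = 1 whenever y_n = −1, ‖XᵀD_+λ‖₂ ≤ 1, and ‖XᵀD_−λ‖₂ ≤ 1. Then λ is dual feasible: |λᵀ(Xu)_+| ≤ 1 for every u ∈ ℝ^d with ‖u‖₂ ≤ 1. -/
/-!
Spike-freeness writes `(Xu)₊ = Xz` with `‖z‖ ≤ 1`, so `λᵀ(Xu)₊ = Σ λₙ ⟪xₙ, z⟫`. Since `(Xu)₊ ≥ 0`,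
dropping the terms outside `D₊` (where `yₙ = -1`, hence `λₙ ≤ 0`) can only increase this sum, and
dropping those outside `D₋` (where `λₙ ≥ 0`) can only decrease it. The two truncated sums are
`⟪XᵀD₊λ, z⟫` and `⟪XᵀD₋λ, z⟫`, both at most `1` in absolute value by Cauchy–Schwarz.
-/

open scoped InnerProductSpace

section Mask

variable {ι : Type*} [Fintype ι] {D a : ι → ℝ}

theorem sum_le_sum_mask_mul (hD : ∀ i, D i = 0 ∨ D i = 1) (hneg : ∀ i, D i = 0 → a i ≤ 0) :
    ∑ i, a i ≤ ∑ i, D i * a i :=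
  Finset.sum_le_sum fun i _ => by
    rcases hD i with h | h
    · simpa [h] using hneg i h
    · simp [h]

theorem sum_mask_mul_le_sum (hD : ∀ i, D i = 0 ∨ D i = 1) (hpos : ∀ i, D i = 0 → 0 ≤ a i) :
    ∑ i, D i * a i ≤ ∑ i, a i := by
  have := sum_le_sum_mask_mul (a := -a) hD fun i hi => neg_nonpos.mpr (hpos i hi)
  simpa only [Pi.neg_apply, mul_neg, Finset.sum_neg_distrib, neg_le_neg_iff] using this

end Mask

theorem abs_sum_mul_inner_le_one {ι E : Type*} [Fintype ι] [NormedAddCommGroup E]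
    [InnerProductSpace ℝ E] (x : ι → E) (w : ι → ℝ) {z : E}
    (hw : ‖∑ i, w i • x i‖ ≤ 1) (hz : ‖z‖ ≤ 1) :
    |∑ i, w i * ⟪x i, z⟫_ℝ| ≤ 1 := by
  have hsum : ∑ i, w i * ⟪x i, z⟫_ℝ = ⟪∑ i, w i • x i, z⟫_ℝ := by
    simp only [sum_inner, real_inner_smul_left]
  calc |∑ i, w i * ⟪x i, z⟫_ℝ| = |⟪∑ i, w i • x i, z⟫_ℝ| := by rw [hsum]
    _ ≤ ‖∑ i, w i • x i‖ * ‖z‖ := abs_real_inner_le_norm _ _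
    _ ≤ 1 := mul_le_one₀ hw (norm_nonneg _) hz

/-- Proposition `prop:dual_spike_free`: if `X` is spike-free, the 0/1 patterns
`D₊, D₋` cover the positive and negative labels respectively, and `‖Xᵀ D₊ λ‖ ≤ 1`,
`‖Xᵀ D₋ λ‖ ≤ 1`, then `λ` is dual feasible. -/
theorem dual_feasible_of_spike_free
    {N d : ℕ}
    (x : Fin N → EuclideanSpace ℝ (Fin d)) (y : Fin N → ℝ)
    (hy : ∀ n, y n = 1 ∨ y n = -1)
    (hspikefree : ∀ u : EuclideanSpace ℝ (Fin d), ‖u‖ ≤ 1 →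
      ∃ z : EuclideanSpace ℝ (Fin d), ‖z‖ ≤ 1 ∧
        ∀ n, max (inner ℝ (x n) u : ℝ) 0 = (inner ℝ (x n) z : ℝ))
    (lam : Fin N → ℝ)
    (hlam_sign : ∀ n, 0 ≤ y n * lam n)
    (Dp Dm : Fin N → ℝ)
    (hDp01 : ∀ n, Dp n = 0 ∨ Dp n = 1)
    (hDm01 : ∀ n, Dm n = 0 ∨ Dm n = 1)
    (hDp : ∀ n, y n = 1 → Dp n = 1)
    (hDm : ∀ n, y n = -1 → Dm n = 1)
    (hDpnorm : ‖∑ n, (Dp n * lam n) • x n‖ ≤ 1)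
    (hDmnorm : ‖∑ n, (Dm n * lam n) • x n‖ ≤ 1) :
    ∀ u : EuclideanSpace ℝ (Fin d), ‖u‖ ≤ 1 →
      |∑ n, lam n * max (inner ℝ (x n) u : ℝ) 0| ≤ 1 := by
  intro u hu
  obtain ⟨z, hz, hrelu⟩ := hspikefree u hu
  have hrelu_nonneg : ∀ n, 0 ≤ ⟪x n, z⟫_ℝ := fun n => hrelu n ▸ le_max_right _ _
  have hlam_nonpos : ∀ n, Dp n = 0 → lam n ≤ 0 := fun n h => by
    have hyn : y n = -1 := (hy n).resolve_left fun h1 => by simp [hDp n h1] at h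
    nlinarith [hlam_sign n]
  have hlam_nonneg : ∀ n, Dm n = 0 → 0 ≤ lam n := fun n h => by
    have hyn : y n = 1 := (hy n).resolve_right fun h1 => by simp [hDm n h1] at h
    nlinarith [hlam_sign n]
  have hupper := sum_le_sum_mask_mul hDp01 fun n h =>
    mul_nonpos_of_nonpos_of_nonneg (hlam_nonpos n h) (hrelu_nonneg n)
  have hlower := sum_mask_mul_le_sum hDm01 fun n h =>
    mul_nonneg (hlam_nonneg n h) (hrelu_nonneg n)
  have hp := abs_le.mp (abs_sum_mul_inner_le_one x _ hDpnorm hz)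
  have hm := abs_le.mp (abs_sum_mul_inner_le_one x _ hDmnorm hz)
  simp only [hrelu, mul_assoc] at hp hm ⊢
  rw [abs_le]
  constructor <;> linarith
end

section
/- (Norm balance is invariant under the coupled flow.) Let g : [0,∞) → ℝ^d be any function and let w_1 : [0,∞) → ℝ^d and w_2 : [0,∞) → ℝ be differentiable curves satisfying w_1′(t) = w_2(t)·g(t) and w_2′(t) = ⟨w_1(t), g(t)⟩ for every t ≥ 0. Then ‖w_1(t)‖₂² − w_2(t)² = ‖w_1(0)‖₂² − w_2(0)² for all t ≥ 0; in particular, if ‖w_1(0)‖₂ = |w_2(0)| then ‖w_1(t)‖₂ = |w_2(t)| for all t ≥ 0. -/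
/-!
Along the flow, `d/dt ‖w₁‖² = 2 w₂ ⟪w₁, g⟫ = d/dt w₂²`, so `‖w₁‖² - w₂²` has zero derivative on
`[0, ∞)` and is constant there by the mean value theorem. A balanced start `‖w₁ 0‖ = |w₂ 0|` makes
the constant zero.
-/

theorem Convex.eq_of_hasDerivWithinAt_zero {G : Type*} [NormedAddCommGroup G] [NormedSpace ℝ G]
    {f : ℝ → G} {s : Set ℝ} (hs : Convex ℝ s) (hf : ∀ x ∈ s, HasDerivWithinAt f 0 s x)
    {x y : ℝ} (hx : x ∈ s) (hy : y ∈ s) : f y = f x := by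
  have h := hs.norm_image_sub_le_of_norm_hasDerivWithin_le hf (fun _ _ => norm_zero.le) hx hy
  rwa [zero_mul, norm_le_zero_iff, sub_eq_zero] at h

section CoupledFlow

variable {E : Type*} [NormedAddCommGroup E] [InnerProductSpace ℝ E]
  {g : ℝ → E} {w1 : ℝ → E} {w2 : ℝ → ℝ}

theorem hasDerivAt_norm_sq_sub_sq_eq_zero {t : ℝ} (h1 : HasDerivAt w1 (w2 t • g t) t)
    (h2 : HasDerivAt w2 (inner ℝ (w1 t) (g t)) t) :
    HasDerivAt (fun s => ‖w1 s‖ ^ 2 - w2 s ^ 2) 0 t := by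
  refine (h1.norm_sq.sub (h2.pow 2)).congr_deriv ?_
  rw [real_inner_smul_right]
  ring

theorem norm_sq_sub_sq_eq_of_coupled_flow
    (h1 : ∀ t, 0 ≤ t → HasDerivAt w1 (w2 t • g t) t)
    (h2 : ∀ t, 0 ≤ t → HasDerivAt w2 (inner ℝ (w1 t) (g t)) t) {t : ℝ} (ht : 0 ≤ t) :
    ‖w1 t‖ ^ 2 - w2 t ^ 2 = ‖w1 0‖ ^ 2 - w2 0 ^ 2 :=
  (convex_Ici 0).eq_of_hasDerivWithinAt_zero
    (fun x hx => (hasDerivAt_norm_sq_sub_sq_eq_zero (h1 x hx) (h2 x hx)).hasDerivWithinAt)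
    Set.self_mem_Ici ht

end CoupledFlow

/-- Norm balance is invariant under the coupled flow
`w₁' = w₂ • g`, `w₂' = ⟨w₁, g⟩`. -/
theorem norm_balance_invariant
    {d : ℕ}
    (g : ℝ → EuclideanSpace ℝ (Fin d))
    (w1 : ℝ → EuclideanSpace ℝ (Fin d)) (w2 : ℝ → ℝ)
    (h1 : ∀ t, 0 ≤ t → HasDerivAt w1 (w2 t • g t) t)
    (h2 : ∀ t, 0 ≤ t → HasDerivAt w2 (inner ℝ (w1 t) (g t) : ℝ) t) :
    (∀ t, 0 ≤ t → ‖w1 t‖ ^ 2 - (w2 t) ^ 2 = ‖w1 0‖ ^ 2 - (w2 0) ^ 2) ∧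
    (‖w1 0‖ = |w2 0| → ∀ t, 0 ≤ t → ‖w1 t‖ = |w2 t|) := by
  have conserved := fun t (ht : 0 ≤ t) => norm_sq_sub_sq_eq_of_coupled_flow h1 h2 ht
  refine ⟨conserved, fun h0 t ht => ?_⟩
  have hsq : ‖w1 t‖ ^ 2 = w2 t ^ 2 := by
    simpa only [h0, sq_abs, sub_self, sub_eq_zero] using conserved t ht
  rw [← abs_norm]
  exact (sq_eq_sq_iff_abs_eq_abs _ _).mp hsq
end

section
/- Assume the dataset (X,y) is orthogonally separable and let B = {w ∈ ℝ^d : ‖w‖₂ ≤ 1}. If w ∈ B is a local maximizer over B of the function u ↦ yᵀ(Xu)_+ = Σ_{n=1}^N y_n (x_nᵀu)_+ and (Xw)_+ ≠ 0, then ⟨w, x_n⟩ > 0 for every n with y_n = 1. If w ∈ B is a local minimizer over B of the same function and (Xw)_+ ≠ 0, then ⟨w, x_n⟩ > 0 for every n with y_n = −1. -/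
open Filter Metric Set Topology
open scoped RealInnerProductSpace

/-! The objective `u ↦ ∑ yₙ (⟪xₙ, u⟫)₊` is positively homogeneous, so its value at a local
maximizer on the unit ball is nonnegative (otherwise shrinking `w` would increase it), and hence
some positively labeled point is active at `w`. If a positively labeled `x n₀` had
`⟪w, x n₀⟫ ≤ 0`, then by orthogonal separability moving `w` towards `x n₀` raises every term and
raises that active term linearly, while rescaling back into the ball costs only second order.
Minimizers are maximizers for the labels `-y`. -/

noncomputable section

theorem mul_max_zero_le_mul_max_add_zero {y a b t : ℝ} (hyb : 0 ≤ y * b) (ht : 0 ≤ t) :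
    y * max a 0 ≤ y * max (a + t * b) 0 := by
  rcases lt_trichotomy y 0 with hy | rfl | hy
  · have hb : b ≤ 0 := nonpos_of_mul_nonneg_right hyb hy
    exact mul_le_mul_of_nonpos_left (max_le_max_right 0 (by nlinarith)) hy.le
  · simp
  · have hb : 0 ≤ b := nonneg_of_mul_nonneg_right hyb hy
    exact mul_le_mul_of_nonneg_left (max_le_max_right 0 (by nlinarith)) hy.le

theorem eventually_nhdsWithin_closedBall_of_forall {E : Type*} [SeminormedAddCommGroup E]
    {p : E → Prop} {w : E} {r : ℝ} (hr : 0 < r) (h : ∀ u, ‖u‖ ≤ 1 → ‖u - w‖ < r → p u) :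
    ∀ᶠ u in 𝓝[closedBall 0 1] w, p u :=
  nhdsWithin_basis_ball.eventually_iff.2 ⟨r, hr, fun u ⟨hu, hu1⟩ =>
    h u (mem_closedBall_zero_iff.1 hu1) (mem_ball_iff_norm.1 hu)⟩

section Homogeneous

variable {E : Type*} [NormedAddCommGroup E] [InnerProductSpace ℝ E] {f : E → ℝ} {w v : E}

theorem IsLocalMaxOn.not_eventually_linear_ascent
    (hf : ∀ c : ℝ, 0 ≤ c → ∀ u, f (c • u) = c * f u)
    (hmax : IsLocalMaxOn f (closedBall 0 1) w) (hw : ‖w‖ ≤ 1) (hv : ⟪w, v⟫ ≤ 0)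
    {a : ℝ} (ha : 0 < a) :
    ¬ ∀ᶠ t in 𝓝[>] (0 : ℝ), f w + t * a ≤ f (w + t • v) := by
  intro hascent
  -- Since `⟪w, v⟫ ≤ 0`, shrinking by `(1 + t²‖v‖²)⁻¹` brings `w + t • v` back into the ball,
  -- at a cost of order `t²` against the gain `t * a`.
  set γ : ℝ → E := fun t => (1 + t ^ 2 * ‖v‖ ^ 2)⁻¹ • (w + t • v) with hγ
  have hden : ∀ t : ℝ, 0 < 1 + t ^ 2 * ‖v‖ ^ 2 := fun t => by positivity
  have hγ_cont : Continuous γ :=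
    ((continuous_const.add (by fun_prop)).inv₀ fun t => (hden t).ne').smul (by fun_prop)
  have hγ_ball : ∀ t : ℝ, 0 ≤ t → γ t ∈ closedBall 0 1 := by
    intro t ht
    have hsq : ‖w + t • v‖ ^ 2 ≤ 1 + t ^ 2 * ‖v‖ ^ 2 := by
      rw [norm_add_sq_real, real_inner_smul_right, norm_smul, Real.norm_eq_abs, mul_pow, sq_abs]
      nlinarith [norm_nonneg w]
    rw [mem_closedBall_zero_iff, norm_smul, Real.norm_eq_abs, abs_of_pos (inv_pos.2 (hden t)),
      inv_mul_le_iff₀ (hden t), mul_one]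
    nlinarith [norm_nonneg (w + t • v), hden t, sq_nonneg (t * ‖v‖)]
  have hγ_tendsto : Tendsto γ (𝓝[>] 0) (𝓝[closedBall 0 1] w) := by
    refine tendsto_nhdsWithin_iff.2 ⟨?_, ?_⟩
    · exact (hγ_cont.tendsto' 0 w (by simp [hγ])).mono_left nhdsWithin_le_nhds
    · filter_upwards [self_mem_nhdsWithin] with t ht using hγ_ball t (le_of_lt ht)
  have hsmall : ∀ᶠ t in 𝓝[>] (0 : ℝ), t * ‖v‖ ^ 2 * f w < a := by
    have : Tendsto (fun t : ℝ => t * ‖v‖ ^ 2 * f w) (𝓝 0) (𝓝 0) := by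
      simpa using (by fun_prop : Continuous fun t : ℝ => t * ‖v‖ ^ 2 * f w).tendsto 0
    exact (this.eventually (gt_mem_nhds ha)).filter_mono nhdsWithin_le_nhds
  obtain ⟨t, hle, hasc, hsm, ht : 0 < t⟩ :=
    ((hγ_tendsto.eventually hmax).and (hascent.and (hsmall.and self_mem_nhdsWithin))).exists
  rw [hγ, hf _ (inv_pos.2 (hden t)).le, inv_mul_le_iff₀ (hden t)] at hle
  nlinarith [mul_lt_mul_of_pos_left hsm ht]

theorem IsLocalMaxOn.nonneg_of_homogeneous (hf : ∀ c : ℝ, 0 ≤ c → ∀ u, f (c • u) = c * f u)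
    (hmax : IsLocalMaxOn f (closedBall 0 1) w) (hw : ‖w‖ ≤ 1) : 0 ≤ f w := by
  by_contra! hneg
  refine hmax.not_eventually_linear_ascent hf hw (v := -w) ?_ (neg_pos.2 hneg) ?_
  · rw [inner_neg_right, neg_nonpos]
    exact real_inner_self_nonneg
  · filter_upwards [Ioo_mem_nhdsGT one_pos] with t ht
    have hw' : w + t • -w = (1 - t) • w := by module
    rw [hw', hf _ (by linarith [ht.2])]
    linarith

end Homogeneous

section ReLU

variable {ι E : Type*} [Fintype ι] [NormedAddCommGroup E] [InnerProductSpace ℝ E]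
  {x : ι → E} {y : ι → ℝ}

def reluCorrelation (x : ι → E) (y : ι → ℝ) (u : E) : ℝ :=
  ∑ n, y n * max ⟪x n, u⟫ 0

theorem reluCorrelation_smul {c : ℝ} (hc : 0 ≤ c) (u : E) :
    reluCorrelation x y (c • u) = c * reluCorrelation x y u := by
  simp only [reluCorrelation, Finset.mul_sum, real_inner_smul_right]
  refine Finset.sum_congr rfl fun n _ => ?_
  rw [← mul_zero c, ← mul_max_of_nonneg _ _ hc, mul_zero]
  ring

theorem reluCorrelation_neg_labels (u : E) :
    reluCorrelation x (-y) u = -reluCorrelation x y u := by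
  simp [reluCorrelation, Finset.sum_neg_distrib]

theorem le_reluCorrelation_add_smul {w v : E} {m : ι} (hv : ∀ n, 0 ≤ y n * ⟪x n, v⟫)
    (hm : y m = 1) (hmw : 0 < ⟪x m, w⟫) {t : ℝ} (ht : 0 ≤ t) :
    reluCorrelation x y w + t * ⟪x m, v⟫ ≤ reluCorrelation x y (w + t • v) := by
  set gain : ι → ℝ := fun n => y n * max ⟪x n, w + t • v⟫ 0 - y n * max ⟪x n, w⟫ 0
  have hgain : ∀ n, 0 ≤ gain n := fun n => by
    simpa [gain, inner_add_right, real_inner_smul_right]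
      using mul_max_zero_le_mul_max_add_zero (a := ⟪x n, w⟫) (hv n) ht
  have hgain_m : gain m = t * ⟪x m, v⟫ := by
    have hmv : 0 ≤ ⟪x m, v⟫ := by simpa [hm] using hv m
    simp only [gain, hm, one_mul, inner_add_right, real_inner_smul_right]
    rw [max_eq_left hmw.le, max_eq_left (by positivity)]
    ring
  calc reluCorrelation x y w + t * ⟪x m, v⟫
      ≤ reluCorrelation x y w + ∑ n, gain n := by
        rw [← hgain_m]
        gcongr
        exact Finset.single_le_sum (fun n _ => hgain n) (Finset.mem_univ m)
    _ = reluCorrelation x y (w + t • v) := by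
        simp [gain, reluCorrelation, Finset.sum_sub_distrib]

theorem exists_label_one_inner_pos_of_reluCorrelation_nonneg (hy : ∀ n, y n = 1 ∨ y n = -1)
    {w : E} (hF : 0 ≤ reluCorrelation x y w) (hact : ∃ n, 0 < ⟪x n, w⟫) :
    ∃ m, y m = 1 ∧ 0 < ⟪x m, w⟫ := by
  by_contra! hnone
  obtain ⟨k, hk⟩ := hact
  have hterm : ∀ n, y n * max ⟪x n, w⟫ 0 ≤ 0 := fun n => by
    rcases hy n with h | h
    · simp [h, hnone n h]
    · simp [h]
  have hk_neg : y k * max ⟪x k, w⟫ 0 < 0 := by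
    rcases hy k with h | h
    · exact absurd hk (not_lt.2 (hnone k h))
    · simpa [h, max_eq_left hk.le] using hk
  have : reluCorrelation x y w < 0 :=
    Finset.sum_neg' (fun n _ => hterm n) ⟨k, Finset.mem_univ k, hk_neg⟩
  linarith

end ReLU

section OrthogonallySeparable

variable {ι E : Type*} [NormedAddCommGroup E] [InnerProductSpace ℝ E]
  {x : ι → E} {y : ι → ℝ}

structure OrthogonallySeparable (x : ι → E) (y : ι → ℝ) : Prop where
  inner_pos_of_eq : ∀ n n', y n = y n' → 0 < ⟪x n, x n'⟫
  inner_nonpos_of_ne : ∀ n n', y n ≠ y n' → ⟪x n, x n'⟫ ≤ 0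

theorem OrthogonallySeparable.neg (hsep : OrthogonallySeparable x y) :
    OrthogonallySeparable x (-y) :=
  ⟨fun n n' h => hsep.inner_pos_of_eq n n' (neg_injective h),
    fun n n' h => hsep.inner_nonpos_of_ne n n' (mt (congrArg Neg.neg) h)⟩

theorem OrthogonallySeparable.mul_inner_nonneg (hsep : OrthogonallySeparable x y)
    (hy : ∀ n, y n = 1 ∨ y n = -1) (n n' : ι) : 0 ≤ y n * y n' * ⟪x n, x n'⟫ := by
  by_cases h : y n = y n'
  · rw [← h, mul_self_eq_one_iff.2 (hy n), one_mul]
    exact (hsep.inner_pos_of_eq n n' h).le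
  · have hyy : y n * y n' = -1 := by
      rcases hy n with h₁ | h₁ <;> rcases hy n' with h₂ | h₂ <;> simp_all
    rw [hyy]
    linarith [hsep.inner_nonpos_of_ne n n' h]

theorem OrthogonallySeparable.inner_pos_of_isLocalMaxOn [Fintype ι]
    (hsep : OrthogonallySeparable x y) (hy : ∀ n, y n = 1 ∨ y n = -1) {w : E} (hw : ‖w‖ ≤ 1)
    (hmax : IsLocalMaxOn (reluCorrelation x y) (closedBall 0 1) w) (hact : ∃ n, 0 < ⟪x n, w⟫)
    {n₀ : ι} (hn₀ : y n₀ = 1) : 0 < ⟪w, x n₀⟫ := by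
  have hF := hmax.nonneg_of_homogeneous (fun c hc u => reluCorrelation_smul hc u) hw
  obtain ⟨m, hm, hmw⟩ := exists_label_one_inner_pos_of_reluCorrelation_nonneg hy hF hact
  by_contra! hwn₀
  refine hmax.not_eventually_linear_ascent (fun c hc u => reluCorrelation_smul hc u) hw hwn₀
    (hsep.inner_pos_of_eq m n₀ (hm.trans hn₀.symm)) ?_
  filter_upwards [self_mem_nhdsWithin] with t ht
  refine le_reluCorrelation_add_smul (fun n => ?_) hm hmw (le_of_lt ht)
  simpa [hn₀] using hsep.mul_inner_nonneg hy n n₀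

theorem OrthogonallySeparable.inner_pos_of_isLocalMinOn [Fintype ι]
    (hsep : OrthogonallySeparable x y) (hy : ∀ n, y n = 1 ∨ y n = -1) {w : E} (hw : ‖w‖ ≤ 1)
    (hmin : IsLocalMinOn (reluCorrelation x y) (closedBall 0 1) w) (hact : ∃ n, 0 < ⟪x n, w⟫)
    {n₀ : ι} (hn₀ : y n₀ = -1) : 0 < ⟪w, x n₀⟫ := by
  have hy' : ∀ n, (-y) n = 1 ∨ (-y) n = -1 := fun n => by rcases hy n with h | h <;> simp [h]
  refine hsep.neg.inner_pos_of_isLocalMaxOn hy' hw ?_ hact (by simp [hn₀])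
  simpa only [funext reluCorrelation_neg_labels] using hmin.neg

end OrthogonallySeparable

/-- Lemma `lem:ortho_cond_max`: on orthogonally separable data, a local
maximizer `w` of `u ↦ yᵀ(Xu)₊` over the unit ball with `(Xw)₊ ≠ 0` has positive correlation
with every positively-labeled point; a local minimizer with `(Xw)₊ ≠ 0` has positive
correlation with every negatively-labeled point. -/
theorem local_extrema_correlation_orthogonal_separable
    {N d : ℕ}
    (x : Fin N → EuclideanSpace ℝ (Fin d)) (y : Fin N → ℝ)
    (hy : ∀ n, y n = 1 ∨ y n = -1)
    (hsep_same : ∀ n n', y n = y n' → 0 < (inner ℝ (x n) (x n') : ℝ))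
    (hsep_diff : ∀ n n', y n ≠ y n' → (inner ℝ (x n) (x n') : ℝ) ≤ 0)
    (w : EuclideanSpace ℝ (Fin d)) (hw : ‖w‖ ≤ 1)
    (hnz : ∃ n, 0 < max (inner ℝ (x n) w : ℝ) 0) :
    ((∃ r > (0:ℝ), ∀ u : EuclideanSpace ℝ (Fin d), ‖u‖ ≤ 1 → ‖u - w‖ < r →
        ∑ n, y n * max (inner ℝ (x n) u : ℝ) 0 ≤ ∑ n, y n * max (inner ℝ (x n) w : ℝ) 0) →
      ∀ n, y n = 1 → 0 < (inner ℝ w (x n) : ℝ)) ∧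
    ((∃ r > (0:ℝ), ∀ u : EuclideanSpace ℝ (Fin d), ‖u‖ ≤ 1 → ‖u - w‖ < r →
        ∑ n, y n * max (inner ℝ (x n) w : ℝ) 0 ≤ ∑ n, y n * max (inner ℝ (x n) u : ℝ) 0) →
      ∀ n, y n = -1 → 0 < (inner ℝ w (x n) : ℝ)) := by
  have hsep : OrthogonallySeparable x y := ⟨hsep_same, hsep_diff⟩
  have hact : ∃ n, 0 < ⟪x n, w⟫ := hnz.imp fun n h => (lt_max_iff.1 h).resolve_right (lt_irrefl 0)
  constructor
  · rintro ⟨r, hr, hloc⟩ n hn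
    exact hsep.inner_pos_of_isLocalMaxOn hy hw (eventually_nhdsWithin_closedBall_of_forall hr hloc)
      hact hn
  · rintro ⟨r, hr, hloc⟩ n hn
    exact hsep.inner_pos_of_isLocalMinOn hy hw (eventually_nhdsWithin_closedBall_of_forall hr hloc)
      hact hn
end
end

section
/- Assume the dataset (X,y) is orthogonally separable, let B = {w ∈ ℝ^d : ‖w‖₂ ≤ 1}, and let u ∈ ℝ^d with ‖u‖₂ = 1 and g(u,y) ≠ 0, where g(u,y) = Σ_{n : x_nᵀu > 0} y_n x_n. Then u is a local maximizer over B of v ↦ yᵀ(Xv)_+ if and only if u = g(u,y)/‖g(u,y)‖₂ (i.e. cos∠(u, g(u,y)) = 1); and u is a local minimizer over B of v ↦ yᵀ(Xv)_+ if and only if u = −g(u,y)/‖g(u,y)‖₂ (i.e. cos∠(u, g(u,y)) = −1). -/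
/-
Near `u` the signs of all `⟪x n, v⟫` with `⟪x n, u⟫ ≠ 0` are frozen, so `v ↦ yᵀ(Xv)₊` is
`⟪g, v⟫` plus kink terms `y n (x nᵀv)₊` from the points orthogonal to `u`. Orthogonal
separability gives `y n ⟪x n, g⟫ ≥ 0`, so along the chord from `u` to `ĝ = g/‖g‖` (which stays
in the ball) the kinks do not decrease while `⟪g, ·⟫` strictly increases unless `u = ĝ`.
Conversely, if `u = ĝ`, a point orthogonal to `u` is orthogonal to `g` and hence has label `-1`,
so the kinks only decrease, while `⟪g, v⟫ ≤ ‖g‖ = ⟪g, u⟫` on the ball. Minimizers are the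
maximizers for the flipped labels `-y`.
-/

open Filter Topology Metric Finset RealInnerProductSpace

section LocalExtremaOnBall

variable {E β : Type*} [SeminormedAddCommGroup E] [Preorder β] {f : E → β} {a : E} {R : ℝ}

theorem isLocalMaxOn_closedBall_zero_iff :
    IsLocalMaxOn f (closedBall 0 R) a ↔ ∃ r > 0, ∀ v, ‖v‖ ≤ R → ‖v - a‖ < r → f v ≤ f a := by
  simp only [IsLocalMaxOn, IsMaxFilter, eventually_nhdsWithin_iff, Metric.eventually_nhds_iff,
    dist_eq_norm, mem_closedBall_zero_iff]
  exact exists_congr fun _ => and_congr_right fun _ => forall_congr' fun _ => Imp.swap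

theorem isLocalMinOn_closedBall_zero_iff :
    IsLocalMinOn f (closedBall 0 R) a ↔ ∃ r > 0, ∀ v, ‖v‖ ≤ R → ‖v - a‖ < r → f a ≤ f v :=
  isLocalMaxOn_closedBall_zero_iff (β := βᵒᵈ)

end LocalExtremaOnBall

theorem mul_max_zero_nonneg {a b : ℝ} (h : 0 ≤ a * b) : 0 ≤ a * max b 0 := by
  rcases le_total b 0 with hb | hb
  · rw [max_eq_right hb, mul_zero]
  · rwa [max_eq_left hb]

section OrthSeparable

variable {ι E : Type*} [NormedAddCommGroup E] [InnerProductSpace ℝ E]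

structure OrthSeparable (x : ι → E) (y : ι → ℝ) : Prop where
  label : ∀ n, y n = 1 ∨ y n = -1
  inner_pos : ∀ n n', y n = y n' → 0 < ⟪x n, x n'⟫
  inner_nonpos : ∀ n n', y n ≠ y n' → ⟪x n, x n'⟫ ≤ 0

namespace OrthSeparable

variable {x : ι → E} {y : ι → ℝ} (h : OrthSeparable x y)
include h

theorem neg : OrthSeparable x (-y) where
  label n := by rcases h.label n with hn | hn <;> simp [hn]
  inner_pos n n' hnn' := h.inner_pos n n' (neg_inj.1 hnn')
  inner_nonpos n n' hnn' := h.inner_nonpos n n' fun e => hnn' (by simp [e])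

theorem mul_eq_neg_one_of_ne {n m : ι} (hnm : y n ≠ y m) : y n * y m = -1 := by
  rcases h.label n with hn | hn <;> rcases h.label m with hm | hm <;> simp_all

theorem mul_mul_inner_nonneg (n m : ι) : 0 ≤ y n * y m * ⟪x n, x m⟫ := by
  by_cases hnm : y n = y m
  · exact mul_nonneg (hnm ▸ mul_self_nonneg _) (h.inner_pos n m hnm).le
  · rw [h.mul_eq_neg_one_of_ne hnm]
    linarith [h.inner_nonpos n m hnm]

theorem mul_mul_inner_pos {n m : ι} (hnm : 0 < y n * y m) : 0 < y n * y m * ⟪x n, x m⟫ := by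
  by_cases he : y n = y m
  · exact mul_pos hnm (h.inner_pos n m he)
  · linarith [h.mul_eq_neg_one_of_ne he]

end OrthSeparable

end OrthSeparable

section ReluSum

variable {ι E : Type*} [Fintype ι] [NormedAddCommGroup E] [InnerProductSpace ℝ E]

/-- The paper's `yᵀ(Xv)₊`, for the data points `x n` with labels `y n`. -/
noncomputable def reluSum (x : ι → E) (y : ι → ℝ) (v : E) : ℝ :=
  ∑ n, y n * max ⟪x n, v⟫ 0

/-- The paper's `g(u, y)`, the gradient of `reluSum x y` at `u` where it is differentiable. -/
noncomputable def activeGrad (x : ι → E) (y : ι → ℝ) (u : E) : E :=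
  ∑ n ∈ univ.filter (fun n => 0 < ⟪x n, u⟫), y n • x n

variable (x : ι → E) (y : ι → ℝ) (u : E)

theorem inner_activeGrad (v : E) :
    ⟪activeGrad x y u, v⟫ = ∑ n ∈ univ.filter (fun n => 0 < ⟪x n, u⟫), y n * ⟪x n, v⟫ := by
  simp only [activeGrad, sum_inner, real_inner_smul_left]

theorem reluSum_self : reluSum x y u = ⟪activeGrad x y u, u⟫ := by
  rw [inner_activeGrad, sum_filter]
  refine sum_congr rfl fun n _ => ?_
  split_ifs with h
  · rw [max_eq_left h.le]
  · rw [max_eq_right (not_lt.1 h), mul_zero]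

theorem eventually_reluSum_eq : ∀ᶠ v in 𝓝 u, reluSum x y v = ⟪activeGrad x y u, v⟫ +
    ∑ n ∈ univ.filter (fun n => ⟪x n, u⟫ = 0), y n * max ⟪x n, v⟫ 0 := by
  have hsign : ∀ᶠ v in 𝓝 u, ∀ n,
      (0 < ⟪x n, u⟫ → 0 < ⟪x n, v⟫) ∧ (⟪x n, u⟫ < 0 → ⟪x n, v⟫ < 0) := by
    refine eventually_all.2 fun n => ?_
    have hc : Tendsto (fun v => ⟪x n, v⟫) (𝓝 u) (𝓝 ⟪x n, u⟫) :=
      (continuous_const.inner continuous_id).tendsto u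
    exact (eventually_imp_distrib_left.2 fun h => hc.eventually (lt_mem_nhds h)).and
      (eventually_imp_distrib_left.2 fun h => hc.eventually (gt_mem_nhds h))
  filter_upwards [hsign] with v hv
  rw [inner_activeGrad, sum_filter, sum_filter, ← sum_add_distrib, reluSum]
  refine sum_congr rfl fun n _ => ?_
  rcases lt_trichotomy ⟪x n, u⟫ 0 with h | h | h
  · simp [h.ne, h.not_gt, max_eq_right ((hv n).2 h).le]
  · simp [h]
  · simp [h.ne', h, max_eq_left ((hv n).1 h).le]

theorem reluSum_neg : reluSum x (-y) = -reluSum x y := by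
  ext v
  simp [reluSum, sum_neg_distrib]

theorem activeGrad_neg : activeGrad x (-y) u = -activeGrad x y u := by
  simp [activeGrad, sum_neg_distrib]

end ReluSum


namespace OrthSeparable

variable {ι E : Type*} [Fintype ι] [NormedAddCommGroup E] [InnerProductSpace ℝ E]
  {x : ι → E} {y : ι → ℝ} {u : E} (h : OrthSeparable x y)
include h

theorem mul_inner_activeGrad_nonneg (u : E) (n : ι) : 0 ≤ y n * ⟪x n, activeGrad x y u⟫ := by
  rw [real_inner_comm, inner_activeGrad, mul_sum]
  refine sum_nonneg fun m _ => ?_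
  rw [← mul_assoc, real_inner_comm]
  exact h.mul_mul_inner_nonneg n m

theorem mul_inner_activeGrad_pos {u : E} {n : ι} (hn : 0 < y n * ⟪activeGrad x y u, u⟫) :
    0 < y n * ⟪x n, activeGrad x y u⟫ := by
  rw [inner_activeGrad, mul_sum] at hn
  obtain ⟨m, hmS, hm⟩ := exists_lt_of_sum_lt (sum_const_zero.trans_lt hn)
  have hmu : 0 < ⟪x m, u⟫ := (mem_filter.1 hmS).2
  have hnm : 0 < y n * y m := (mul_pos_iff_of_pos_right hmu).1 (by simpa [mul_assoc] using hm)
  rw [real_inner_comm, inner_activeGrad, mul_sum]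
  refine sum_pos' (fun k _ => ?_) ⟨m, hmS, ?_⟩
  · rw [← mul_assoc, real_inner_comm]
    exact h.mul_mul_inner_nonneg n k
  · rw [← mul_assoc, real_inner_comm]
    exact h.mul_mul_inner_pos hnm

theorem isLocalMaxOn_reluSum_of_eq (hg : activeGrad x y u ≠ 0)
    (hu : u = ‖activeGrad x y u‖⁻¹ • activeGrad x y u) :
    IsLocalMaxOn (reluSum x y) (closedBall 0 1) u := by
  set g := activeGrad x y u
  have hgu : ⟪g, u⟫ = ‖g‖ := by
    rw [hu, real_inner_smul_right, real_inner_self_eq_norm_sq]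
    field_simp
  have hlabel : ∀ n, ⟪x n, u⟫ = 0 → y n ≤ 0 := by
    intro n hn
    by_contra! hpos
    have hxg := h.mul_inner_activeGrad_pos (n := n)
      (by rw [hgu]; exact mul_pos hpos (norm_pos_iff.2 hg))
    rw [hu, real_inner_smul_right, mul_eq_zero] at hn
    rcases hn with hn | hn
    · exact inv_ne_zero (norm_ne_zero_iff.2 hg) hn
    · rw [hn, mul_zero] at hxg
      exact hxg.false
  filter_upwards [nhdsWithin_le_nhds (eventually_reluSum_eq x y u), self_mem_nhdsWithin]
    with v hv hvB
  have hgv : ⟪g, v⟫ ≤ ‖g‖ :=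
    (real_inner_le_norm g v).trans
      (mul_le_of_le_one_right (norm_nonneg g) (mem_closedBall_zero_iff.1 hvB))
  have hkink : ∑ n ∈ univ.filter (fun n => ⟪x n, u⟫ = 0), y n * max ⟪x n, v⟫ 0 ≤ 0 :=
    sum_nonpos fun n hn =>
      mul_nonpos_of_nonpos_of_nonneg (hlabel n (mem_filter.1 hn).2) (le_max_right _ _)
  rw [hv, reluSum_self, hgu]
  linarith

theorem eq_of_isLocalMaxOn_reluSum (hu : ‖u‖ = 1) (hg : activeGrad x y u ≠ 0)
    (hmax : IsLocalMaxOn (reluSum x y) (closedBall 0 1) u) :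
    u = ‖activeGrad x y u‖⁻¹ • activeGrad x y u := by
  set g := activeGrad x y u
  set e := ‖g‖⁻¹ • g
  have he : ‖e‖ = 1 := norm_smul_inv_norm hg
  let φ : ℝ → E := fun t => u + t • (e - u)
  have hφ : Tendsto φ (𝓝 0) (𝓝 u) := by
    have hφc : Continuous φ := by fun_prop
    simpa [φ] using hφc.tendsto 0
  have hsmall : ∀ᶠ t in 𝓝[>] (0 : ℝ), t ∈ Set.Ioc 0 1 := Ioc_mem_nhdsGT one_pos
  obtain ⟨t, ⟨ht0, ht1⟩, hmaxt, hvt⟩ := (hsmall.and (nhdsWithin_le_nhds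
    (hφ.eventually ((eventually_nhdsWithin_iff.1 hmax).and (eventually_reluSum_eq x y u))))).exists
  have hinner : ∀ z, ⟪z, φ t⟫ = ⟪z, u⟫ + t * (⟪z, e⟫ - ⟪z, u⟫) := fun z => by
    simp only [φ, inner_add_right, inner_smul_right, inner_sub_right]
  have hφB : φ t ∈ closedBall 0 1 :=
    (convex_closedBall 0 1).add_smul_sub_mem (mem_closedBall_zero_iff.2 hu.le)
      (mem_closedBall_zero_iff.2 he.le) ⟨ht0.le, ht1⟩
  have hkink : 0 ≤ ∑ n ∈ univ.filter (fun n => ⟪x n, u⟫ = 0), y n * max ⟪x n, φ t⟫ 0 := by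
    refine sum_nonneg fun n hn => mul_max_zero_nonneg ?_
    have hyx : y n * ⟪x n, φ t⟫ = t * ‖g‖⁻¹ * (y n * ⟪x n, g⟫) := by
      rw [hinner, (mem_filter.1 hn).2, real_inner_smul_right]
      ring
    rw [hyx]
    exact mul_nonneg (by positivity) (h.mul_inner_activeGrad_nonneg u n)
  have hge : ⟪g, e⟫ ≤ ⟪g, u⟫ := by
    have hle := hmaxt hφB
    rw [hvt, reluSum_self, hinner] at hle
    nlinarith
  refine (inner_eq_one_iff_of_norm_eq_one hu he).1 (le_antisymm (α := ℝ) ?_ ?_)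
  · simpa [hu, he] using real_inner_le_norm u e
  · calc (1 : ℝ) = ⟪e, e⟫ := by rw [real_inner_self_eq_norm_sq, he, one_pow]
      _ = ‖g‖⁻¹ * ⟪g, e⟫ := real_inner_smul_left _ _ _
      _ ≤ ‖g‖⁻¹ * ⟪g, u⟫ := by gcongr
      _ = ⟪e, u⟫ := (real_inner_smul_left _ _ _).symm
      _ = ⟪u, e⟫ := real_inner_comm _ _

theorem isLocalMaxOn_reluSum_iff (hu : ‖u‖ = 1) (hg : activeGrad x y u ≠ 0) :
    IsLocalMaxOn (reluSum x y) (closedBall 0 1) u ↔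
      u = ‖activeGrad x y u‖⁻¹ • activeGrad x y u :=
  ⟨h.eq_of_isLocalMaxOn_reluSum hu hg, h.isLocalMaxOn_reluSum_of_eq hg⟩

theorem isLocalMinOn_reluSum_iff (hu : ‖u‖ = 1) (hg : activeGrad x y u ≠ 0) :
    IsLocalMinOn (reluSum x y) (closedBall 0 1) u ↔
      u = -(‖activeGrad x y u‖⁻¹ • activeGrad x y u) := by
  have hmax := h.neg.isLocalMaxOn_reluSum_iff hu (by rwa [activeGrad_neg, neg_ne_zero])
  rw [reluSum_neg, activeGrad_neg, norm_neg, smul_neg] at hmax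
  rw [← hmax]
  exact ⟨IsLocalMinOn.neg, fun hmin => by simpa using hmin.neg⟩

end OrthSeparable

/-- Proposition `prop:ortho_cond`: on orthogonally separable data, a unit
vector `u` with `g(u,y) ≠ 0` is a local maximizer of `v ↦ yᵀ(Xv)₊` over the unit ball iff
`u = g(u,y)/‖g(u,y)‖` (i.e. `cos∠(u, g(u,y)) = 1`), and a local minimizer iff
`u = −g(u,y)/‖g(u,y)‖`. -/
theorem local_extrema_iff_aligned
    {N d : ℕ}
    (x : Fin N → EuclideanSpace ℝ (Fin d)) (y : Fin N → ℝ)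
    (hy : ∀ n, y n = 1 ∨ y n = -1)
    (hsep_same : ∀ n n', y n = y n' → 0 < (inner ℝ (x n) (x n') : ℝ))
    (hsep_diff : ∀ n n', y n ≠ y n' → (inner ℝ (x n) (x n') : ℝ) ≤ 0)
    (u : EuclideanSpace ℝ (Fin d)) (hu : ‖u‖ = 1)
    (g : EuclideanSpace ℝ (Fin d))
    (hg : g = ∑ n ∈ Finset.univ.filter (fun n => 0 < (inner ℝ (x n) u : ℝ)), y n • x n)
    (hgne : g ≠ 0) :
    ((∃ r > (0:ℝ), ∀ v : EuclideanSpace ℝ (Fin d), ‖v‖ ≤ 1 → ‖v - u‖ < r →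
        ∑ n, y n * max (inner ℝ (x n) v : ℝ) 0 ≤ ∑ n, y n * max (inner ℝ (x n) u : ℝ) 0) ↔
      u = ‖g‖⁻¹ • g) ∧
    ((∃ r > (0:ℝ), ∀ v : EuclideanSpace ℝ (Fin d), ‖v‖ ≤ 1 → ‖v - u‖ < r →
        ∑ n, y n * max (inner ℝ (x n) u : ℝ) 0 ≤ ∑ n, y n * max (inner ℝ (x n) v : ℝ) 0) ↔
      u = -(‖g‖⁻¹ • g)) := by
  have hxy : OrthSeparable x y := ⟨hy, hsep_same, hsep_diff⟩
  subst hg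
  exact ⟨isLocalMaxOn_closedBall_zero_iff.symm.trans (hxy.isLocalMaxOn_reluSum_iff hu hgne),
    isLocalMinOn_closedBall_zero_iff.symm.trans (hxy.isLocalMinOn_reluSum_iff hu hgne)⟩
end

section
/- Let λ ∈ ℝ^N and let u_0 ∈ ℝ^d satisfy g(u_0,λ) ≠ 0 and u_0 = g(u_0,λ)/‖g(u_0,λ)‖₂. Let σ ∈ {−1,0,1}^N be the entrywise sign pattern σ_n = sign(x_nᵀu_0). If ‖g(σ',λ)‖₂ = ‖g(σ,λ)‖₂ for every σ' ∈ {−1,1}^N with σ'_n = σ_n for all n with σ_n ≠ 0, then u_0 is a local maximizer of u ↦ λᵀ(Xu)_+ over the closed unit ball B = {u ∈ ℝ^d : ‖u‖₂ ≤ 1}. -/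
/-!
Near `u₀` the signs of the nonzero `⟪xₙ, u₀⟫` do not change. For such `u`, complete the sign
pattern `σ` of `u₀` to an open pattern `σ'` by giving each index with `xₙ ⊥ u₀` the sign of
`λₙ ⟪xₙ, u⟫`; then every term `λₙ (⟪xₙ, u⟫)₊` is dominated by the corresponding term of
`⟪g(σ', λ), u⟫`, so by Cauchy–Schwarz
`λᵀ(Xu)₊ ≤ ‖g(σ', λ)‖ ‖u‖ ≤ ‖g(σ', λ)‖ = ‖g₀‖ = ⟪g₀, u₀⟫ = λᵀ(Xu₀)₊`.
-/

open Finset Filter Topology RealInnerProductSpace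

namespace Real

theorem sign_eq_one_iff {r : ℝ} : sign r = 1 ↔ 0 < r := by
  refine ⟨fun h => ?_, sign_of_pos⟩
  obtain hn | rfl | hp := lt_trichotomy r 0
  · norm_num [sign_of_neg hn] at h
  · simp at h
  · exact hp

theorem eventually_sign_eq {X : Type*} [TopologicalSpace X] {f : X → ℝ} {a : X}
    (hf : ContinuousAt f a) : ∀ᶠ y in 𝓝 a, f a ≠ 0 → sign (f y) = sign (f a) := by
  obtain hn | h0 | hp := lt_trichotomy (f a) 0
  · filter_upwards [hf.eventually (eventually_lt_nhds hn)] with y hy _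
    rw [sign_of_neg hy, sign_of_neg hn]
  · exact Eventually.of_forall fun _ hne => absurd h0 hne
  · filter_upwards [hf.eventually (eventually_gt_nhds hp)] with y hy _
    rw [sign_of_pos hy, sign_of_pos hp]

end Real

theorem mul_max_zero_eq_ite (l a : ℝ) : l * max a 0 = if 0 < a then l * a else 0 := by
  split_ifs with ha
  · rw [max_eq_left ha.le]
  · rw [max_eq_right (not_lt.mp ha), mul_zero]

theorem mul_max_zero_le_max_mul_zero (l a : ℝ) : l * max a 0 ≤ max (l * a) 0 := by
  rw [mul_max_zero_eq_ite]
  split_ifs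
  · exact le_max_left _ _
  · exact le_max_right _ _

noncomputable def refineSign (s b : ℝ) : ℝ :=
  if s = 0 then (if 0 ≤ b then 1 else -1) else s

theorem refineSign_of_ne_zero {s : ℝ} (b : ℝ) (hs : s ≠ 0) : refineSign s b = s :=
  if_neg hs

theorem refineSign_eq_one_or_eq_neg_one {s : ℝ} (b : ℝ) (hs : s = -1 ∨ s = 0 ∨ s = 1) :
    refineSign s b = 1 ∨ refineSign s b = -1 := by
  unfold refineSign
  rcases hs with rfl | rfl | rfl <;> norm_num
  exact le_or_gt 0 b

theorem mul_max_zero_le_ite_refineSign {s l a : ℝ} (h : s ≠ 0 → Real.sign a = s) :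
    l * max a 0 ≤ if refineSign s (l * a) = 1 then l * a else 0 := by
  by_cases hs : s = 0
  · subst hs
    refine (mul_max_zero_le_max_mul_zero l a).trans ?_
    by_cases hb : 0 ≤ l * a
    · simp [refineSign, hb]
    · norm_num [refineSign, hb, (not_le.mp hb).le]
  · rw [refineSign_of_ne_zero _ hs, ← h hs]
    simp only [Real.sign_eq_one_iff]
    exact (mul_max_zero_eq_ite l a).le

section InnerProductSpace

variable {ι E : Type*} [NormedAddCommGroup E] [InnerProductSpace ℝ E]

theorem inner_sum_filter_smul (s : Finset ι) (p : ι → Prop) [DecidablePred p] (l : ι → ℝ)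
    (x : ι → E) (u : E) :
    ⟪∑ n ∈ s with p n, l n • x n, u⟫ = ∑ n ∈ s, if p n then l n * ⟪x n, u⟫ else 0 := by
  rw [sum_inner, sum_filter]
  simp_rw [real_inner_smul_left]

variable [Fintype ι] (x : ι → E) (l : ι → ℝ)

theorem sum_mul_max_inner_eq_inner (u : E) :
    ∑ n, l n * max ⟪x n, u⟫ 0 = ⟪∑ n with 0 < ⟪x n, u⟫, l n • x n, u⟫ := by
  simp_rw [inner_sum_filter_smul, mul_max_zero_eq_ite]

theorem sum_mul_max_inner_le_inner_refineSign {σ : ι → ℝ} {u : E}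
    (hu : ∀ n, σ n ≠ 0 → Real.sign ⟪x n, u⟫ = σ n) :
    ∑ n, l n * max ⟪x n, u⟫ 0 ≤
      ⟪∑ n with refineSign (σ n) (l n * ⟪x n, u⟫) = 1, l n • x n, u⟫ := by
  rw [inner_sum_filter_smul]
  exact sum_le_sum fun n _ => mul_max_zero_le_ite_refineSign (hu n)

end InnerProductSpace

theorem local_max_of_refinement_norm_eq_general
    {N d : ℕ}
    (x : Fin N → EuclideanSpace ℝ (Fin d))
    (lam : Fin N → ℝ)
    (u0 : EuclideanSpace ℝ (Fin d))
    (g0 : EuclideanSpace ℝ (Fin d))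
    (hg0 : g0 = ∑ n ∈ Finset.univ.filter (fun n => 0 < (inner ℝ (x n) u0 : ℝ)), lam n • x n)
    (hu0 : u0 = ‖g0‖⁻¹ • g0)
    (sigma : Fin N → ℝ)
    (hsigma : ∀ n, sigma n = Real.sign (inner ℝ (x n) u0 : ℝ))
    (hrefine : ∀ sigma' : Fin N → ℝ,
      (∀ n, sigma' n = 1 ∨ sigma' n = -1) →
      (∀ n, sigma n ≠ 0 → sigma' n = sigma n) →
      ‖∑ n ∈ Finset.univ.filter (fun n => sigma' n = 1), lam n • x n‖ = ‖g0‖) :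
    ∃ r > (0:ℝ), ∀ u : EuclideanSpace ℝ (Fin d), ‖u‖ ≤ 1 → ‖u - u0‖ < r →
      ∑ n, lam n * max (inner ℝ (x n) u : ℝ) 0 ≤
        ∑ n, lam n * max (inner ℝ (x n) u0 : ℝ) 0 := by
  have hvalue : ∑ n, lam n * max ⟪x n, u0⟫ 0 = ‖g0‖ := by
    rw [sum_mul_max_inner_eq_inner, ← hg0, hu0, real_inner_smul_right,
      real_inner_self_eq_norm_sq, sq, ← mul_assoc, inv_mul_mul_self]
  have hstable : ∀ᶠ u in 𝓝 u0, ∀ n, sigma n ≠ 0 → Real.sign ⟪x n, u⟫ = sigma n := by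
    refine eventually_all.2 fun n => ?_
    filter_upwards [Real.eventually_sign_eq (f := (⟪x n, ·⟫)) (by fun_prop)] with u hu
    simpa only [hsigma, ne_eq, Real.sign_eq_zero_iff] using hu
  obtain ⟨r, hr, hball⟩ := Metric.eventually_nhds_iff.1 hstable
  refine ⟨r, hr, fun u hu hur => ?_⟩
  set sigma' : Fin N → ℝ := fun n => refineSign (sigma n) (lam n * ⟪x n, u⟫)
  have hpm : ∀ n, sigma' n = 1 ∨ sigma' n = -1 := fun n =>
    refineSign_eq_one_or_eq_neg_one _ (hsigma n ▸ Real.sign_apply_eq _)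
  have hext : ∀ n, sigma n ≠ 0 → sigma' n = sigma n := fun n => refineSign_of_ne_zero _
  calc ∑ n, lam n * max ⟪x n, u⟫ 0
      ≤ ⟪∑ n with sigma' n = 1, lam n • x n, u⟫ :=
        sum_mul_max_inner_le_inner_refineSign x lam (hball (by rwa [dist_eq_norm]))
    _ ≤ ‖∑ n with sigma' n = 1, lam n • x n‖ * ‖u‖ := real_inner_le_norm _ _
    _ ≤ ‖∑ n with sigma' n = 1, lam n • x n‖ := mul_le_of_le_one_right (norm_nonneg _) hu
    _ = ∑ n, lam n * max ⟪x n, u0⟫ 0 := by rw [hrefine sigma' hpm hext, hvalue]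

/-- Lemma `lem:ortho_max`: if `u₀ = g(u₀,λ)/‖g(u₀,λ)‖` and every open sign
pattern `σ'` refining `σ = sign(Xu₀)` gives `‖g(σ',λ)‖ = ‖g(σ,λ)‖`, then `u₀` is a local
maximizer of `u ↦ λᵀ(Xu)₊` over the unit ball. -/
theorem local_max_of_refinement_norm_eq
    {N d : ℕ}
    (x : Fin N → EuclideanSpace ℝ (Fin d))
    (lam : Fin N → ℝ)
    (u0 : EuclideanSpace ℝ (Fin d))
    (g0 : EuclideanSpace ℝ (Fin d))
    (hg0 : g0 = ∑ n ∈ Finset.univ.filter (fun n => 0 < (inner ℝ (x n) u0 : ℝ)), lam n • x n)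
    (hg0ne : g0 ≠ 0)
    (hu0 : u0 = ‖g0‖⁻¹ • g0)
    (sigma : Fin N → ℝ)
    (hsigma : ∀ n, sigma n = Real.sign (inner ℝ (x n) u0 : ℝ))
    (hrefine : ∀ sigma' : Fin N → ℝ,
      (∀ n, sigma' n = 1 ∨ sigma' n = -1) →
      (∀ n, sigma n ≠ 0 → sigma' n = sigma n) →
      ‖∑ n ∈ Finset.univ.filter (fun n => sigma' n = 1), lam n • x n‖ = ‖g0‖) :
    ∃ r > (0:ℝ), ∀ u : EuclideanSpace ℝ (Fin d), ‖u‖ ≤ 1 → ‖u - u0‖ < r →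
      ∑ n, lam n * max (inner ℝ (x n) u : ℝ) 0 ≤
        ∑ n, lam n * max (inner ℝ (x n) u0 : ℝ) 0 :=
  local_max_of_refinement_norm_eq_general x lam u0 g0 hg0 hu0 sigma hsigma hrefine
end

section
/- Assume the dataset (X,y) is orthogonally separable and let λ ∈ ℝ^N satisfy y_nλ_n ≥ 0 for all n. Suppose u_0 ∈ ℝ^d satisfies g(u_0,λ) ≠ 0 and u_0 = g(u_0,λ)/‖g(u_0,λ)‖₂, where g(u,λ) = Σ_{n : x_nᵀu > 0} λ_n x_n. Then for every n ∈ {1,…,N}: x_nᵀu_0 > 0 if and only if y_n = 1. -/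
/-!
Orthogonal separability makes every term `λ_m ⟪x_n, x_m⟫` of `⟪x_n, g(u₀, λ)⟫` have the sign of
`y_n` once `y_m λ_m ≥ 0`. Hence a point with `y_n = -1` has `⟪x_n, u₀⟫ ≤ 0` and is inactive, so
every active weight is nonnegative, and one of them is positive because `g(u₀, λ) ≠ 0`. That
positive weight makes `⟪x_n, g(u₀, λ)⟫ > 0` for every `x_n` with `y_n = 1`.
-/

open scoped RealInnerProductSpace

section SignConsistentWeights

variable {ι E : Type*} [NormedAddCommGroup E] [InnerProductSpace ℝ E]

lemma label_mul_weighted_inner_nonneg {x : ι → E} {y lam : ι → ℝ}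
    (hy : ∀ n, y n = 1 ∨ y n = -1)
    (hsep_same : ∀ n n', y n = y n' → 0 < ⟪x n, x n'⟫)
    (hsep_diff : ∀ n n', y n ≠ y n' → ⟪x n, x n'⟫ ≤ 0)
    (hlam_sign : ∀ n, 0 ≤ y n * lam n) (n m : ι) :
    0 ≤ y n * (lam m * ⟪x n, x m⟫) := by
  by_cases hnm : y n = y m
  · rw [hnm, ← mul_assoc]
    exact mul_nonneg (hlam_sign m) (hsep_same n m hnm).le
  · have hneg : y n = -y m := by
      rcases hy n with h | h <;> rcases hy m with h' | h' <;> simp_all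
    calc 0 ≤ y m * lam m * -⟪x n, x m⟫ :=
          mul_nonneg (hlam_sign m) (neg_nonneg.2 (hsep_diff n m hnm))
      _ = y n * (lam m * ⟪x n, x m⟫) := by rw [hneg]; ring

lemma label_mul_inner_weighted_sum_eq (x : ι → E) (y lam : ι → ℝ) (s : Finset ι) (n : ι) :
    y n * ⟪x n, ∑ m ∈ s, lam m • x m⟫ = ∑ m ∈ s, y n * (lam m * ⟪x n, x m⟫) := by
  simp only [inner_sum, real_inner_smul_right, Finset.mul_sum]

lemma label_mul_inner_weighted_sum_nonneg {x : ι → E} {y lam : ι → ℝ}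
    (hy : ∀ n, y n = 1 ∨ y n = -1)
    (hsep_same : ∀ n n', y n = y n' → 0 < ⟪x n, x n'⟫)
    (hsep_diff : ∀ n n', y n ≠ y n' → ⟪x n, x n'⟫ ≤ 0)
    (hlam_sign : ∀ n, 0 ≤ y n * lam n) (s : Finset ι) (n : ι) :
    0 ≤ y n * ⟪x n, ∑ m ∈ s, lam m • x m⟫ := by
  rw [label_mul_inner_weighted_sum_eq]
  exact Finset.sum_nonneg fun m _ =>
    label_mul_weighted_inner_nonneg hy hsep_same hsep_diff hlam_sign n m

lemma label_mul_inner_weighted_sum_pos {x : ι → E} {y lam : ι → ℝ}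
    (hy : ∀ n, y n = 1 ∨ y n = -1)
    (hsep_same : ∀ n n', y n = y n' → 0 < ⟪x n, x n'⟫)
    (hsep_diff : ∀ n n', y n ≠ y n' → ⟪x n, x n'⟫ ≤ 0)
    (hlam_sign : ∀ n, 0 ≤ y n * lam n) {s : Finset ι} {n m : ι} (hm : m ∈ s)
    (hnm : y n = y m) (hlam : lam m ≠ 0) :
    0 < y n * ⟪x n, ∑ m ∈ s, lam m • x m⟫ := by
  rw [label_mul_inner_weighted_sum_eq]
  refine Finset.sum_pos' (fun k _ =>
    label_mul_weighted_inner_nonneg hy hsep_same hsep_diff hlam_sign n k) ⟨m, hm, ?_⟩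
  have hym : y m ≠ 0 := by rcases hy m with h | h <;> norm_num [h]
  rw [hnm, ← mul_assoc]
  exact mul_pos ((hlam_sign m).lt_of_ne (mul_ne_zero hym hlam).symm) (hsep_same n m hnm)

end SignConsistentWeights

/-- on orthogonally separable data with sign-consistent `λ`, a stationary
direction `u₀ = g(u₀,λ)/‖g(u₀,λ)‖` activates exactly the positively labeled points:
`x_nᵀu₀ > 0 ↔ y_n = 1`. -/
theorem stationary_direction_activates_positive_class
    {N d : ℕ}
    (x : Fin N → EuclideanSpace ℝ (Fin d)) (y : Fin N → ℝ)
    (hy : ∀ n, y n = 1 ∨ y n = -1)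
    (hsep_same : ∀ n n', y n = y n' → 0 < (inner ℝ (x n) (x n') : ℝ))
    (hsep_diff : ∀ n n', y n ≠ y n' → (inner ℝ (x n) (x n') : ℝ) ≤ 0)
    (lam : Fin N → ℝ)
    (hlam_sign : ∀ n, 0 ≤ y n * lam n)
    (u0 : EuclideanSpace ℝ (Fin d))
    (g0 : EuclideanSpace ℝ (Fin d))
    (hg0 : g0 = ∑ n ∈ Finset.univ.filter (fun n => 0 < (inner ℝ (x n) u0 : ℝ)), lam n • x n)
    (hg0ne : g0 ≠ 0)
    (hu0 : u0 = ‖g0‖⁻¹ • g0) :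
    ∀ n, 0 < (inner ℝ (x n) u0 : ℝ) ↔ y n = 1 := by
  set A := Finset.univ.filter (fun n => 0 < ⟪x n, u0⟫)
  have hactive_iff : ∀ n, 0 < ⟪x n, u0⟫ ↔ 0 < ⟪x n, g0⟫ := fun n => by
    rw [hu0, real_inner_smul_right]
    exact mul_pos_iff_of_pos_left (inv_pos.2 (norm_pos_iff.2 hg0ne))
  have hactive : ∀ m ∈ A, y m = 1 := fun m hm => by
    refine (hy m).resolve_right fun hym => ?_
    have hnonneg := label_mul_inner_weighted_sum_nonneg hy hsep_same hsep_diff hlam_sign A m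
    rw [← hg0, hym] at hnonneg
    linarith [(hactive_iff m).1 (Finset.mem_filter.1 hm).2]
  obtain ⟨m₀, hm₀, hlam₀⟩ : ∃ m ∈ A, lam m ≠ 0 := by
    by_contra! h
    exact hg0ne (hg0.trans (Finset.sum_eq_zero fun m hm => by simp [h m hm]))
  refine fun n => ⟨fun hn => hactive n (Finset.mem_filter.2 ⟨Finset.mem_univ n, hn⟩), fun hyn => ?_⟩
  have hpos := label_mul_inner_weighted_sum_pos hy hsep_same hsep_diff hlam_sign hm₀
    (hyn.trans (hactive m₀ hm₀).symm) hlam₀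
  rw [← hg0, hyn, one_mul] at hpos
  exact (hactive_iff n).2 hpos
end
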